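/- arXiv:2209.04991 — 4 statements merged into one kernel-verified Lean document; each statement's English description precedes it below -/
import Mathlib

section
/- The family of finite Gaussian mixture distributions on the real line, 𝔉_G = { Σ_{k=1}^K π_k N(μ_k, σ_k²) : K ∈ ℕ₊, π_k ≥ 0, Σ_k π_k = 1, μ_k ∈ ℝ, σ_k > 0 }, is dense in (P₂(ℝ), W₂); that is, for every g ∈ P₂(ℝ) and every ε > 0 there exist K ∈ ℕ₊, weights π_1,…,π_K ≥ 0 summing to one, means μ_1,…,μ_K ∈ ℝ, and standard deviations σ_1,…,σ_K > 0 such that W₂(Σ_{k=1}^K π_k N(μ_k, σ_k²), g) < ε. -/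
/-! Approximate `id` in `L²(g)` by a simple function `f`, and let `Z ~ N(0, σ²)` be independent
of `X ~ g`. Then `f X + Z` is the Gaussian mixture `∑_c g(f = c) N(c, σ²)`, and the coupling
`(f X + Z, X)` costs at most `‖f - id‖_{L²(g)} + σ` by Minkowski's inequality. -/

open MeasureTheory ProbabilityTheory ENNReal Filter

/-- Squared 2-Wasserstein distance between two measures on `ℝ`, defined as the infimum of
`∫ (x - y)^2 dγ` over all coupling probability measures `γ` with the given marginals. -/
noncomputable def W2sq (μ ν : MeasureTheory.Measure ℝ) : ℝ≥0∞ :=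
  ⨅ (γ : MeasureTheory.Measure (ℝ × ℝ)) (_ : MeasureTheory.IsProbabilityMeasure γ)
    (_ : γ.map Prod.fst = μ) (_ : γ.map Prod.snd = ν),
    ∫⁻ p, ENNReal.ofReal ((p.1 - p.2) ^ 2) ∂γ

/-- The 2-Wasserstein distance `W₂`. -/
noncomputable def W2 (μ ν : MeasureTheory.Measure ℝ) : ℝ :=
  Real.sqrt (W2sq μ ν).toReal

/-- `μ ∈ P₂(ℝ)`: a Borel probability measure on `ℝ` with finite second moment. -/
def MemP2 (μ : MeasureTheory.Measure ℝ) : Prop :=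
  MeasureTheory.IsProbabilityMeasure μ ∧ (∫⁻ x, ENNReal.ofReal (x ^ 2) ∂μ) < ⊤

lemma lintegral_ofReal_sq_eq_eLpNorm_sq {Ω : Type*} [MeasurableSpace Ω] (μ : Measure Ω)
    (X : Ω → ℝ) : ∫⁻ ω, ENNReal.ofReal (X ω ^ 2) ∂μ = eLpNorm X 2 μ ^ 2 := by
  have h := eLpNorm_nnreal_pow_eq_lintegral (μ := μ) (f := X) (p := 2) two_ne_zero
  simp only [NNReal.coe_ofNat, ENNReal.coe_ofNat] at h
  norm_cast at h
  rw [h]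
  refine lintegral_congr fun ω => ?_
  rw [Real.enorm_eq_ofReal_abs, ← ENNReal.ofReal_pow (abs_nonneg _), sq_abs]

lemma MemP2.memLp_id {g : Measure ℝ} (hg : MemP2 g) : MemLp id 2 g := by
  refine ⟨aestronglyMeasurable_id, ?_⟩
  have h : eLpNorm id 2 g ^ 2 < ∞ := by
    rw [← lintegral_ofReal_sq_eq_eLpNorm_sq]
    exact hg.2
  simpa using h

lemma W2sq_map_le_eLpNorm_sq {Ω : Type*} [MeasurableSpace Ω] (P : Measure Ω)
    [IsProbabilityMeasure P] {X Y : Ω → ℝ} (hX : Measurable X) (hY : Measurable Y) :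
    W2sq (P.map X) (P.map Y) ≤ eLpNorm (X - Y) 2 P ^ 2 := by
  have hXY : Measurable fun ω => (X ω, Y ω) := hX.prodMk hY
  refine iInf_le_of_le (P.map fun ω => (X ω, Y ω)) <|
    iInf_le_of_le (Measure.isProbabilityMeasure_map hXY.aemeasurable) <|
    iInf_le_of_le (Measure.map_map measurable_fst hXY) <|
    iInf_le_of_le (Measure.map_map measurable_snd hXY) ?_
  rw [lintegral_map (by fun_prop) hXY, lintegral_ofReal_sq_eq_eLpNorm_sq]
  rfl

lemma W2_map_lt_of_eLpNorm_sub_lt {Ω : Type*} [MeasurableSpace Ω] (P : Measure Ω)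
    [IsProbabilityMeasure P] {X Y : Ω → ℝ} (hX : Measurable X) (hY : Measurable Y) {ε : ℝ}
    (h : eLpNorm (X - Y) 2 P < ENNReal.ofReal ε) : W2 (P.map X) (P.map Y) < ε := by
  have hε : 0 < ε := ENNReal.ofReal_pos.1 (pos_of_gt h)
  have hsq : W2sq (P.map X) (P.map Y) < ENNReal.ofReal (ε ^ 2) := by
    rw [ENNReal.ofReal_pow hε.le]
    exact (W2sq_map_le_eLpNorm_sq P hX hY).trans_lt (ENNReal.pow_lt_pow_left two_ne_zero h)
  rw [W2, Real.sqrt_lt' hε]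
  exact ENNReal.toReal_lt_of_lt_ofReal hsq

lemma eLpNorm_id_gaussianReal {σ : ℝ} (hσ : 0 ≤ σ) :
    eLpNorm id 2 (gaussianReal 0 ⟨σ ^ 2, sq_nonneg σ⟩) = ENNReal.ofReal σ := by
  set v : NNReal := ⟨σ ^ 2, sq_nonneg σ⟩
  have hvar : eLpNorm id 2 (gaussianReal 0 v) ^ 2 = ENNReal.ofReal v := by
    rw [← lintegral_ofReal_sq_eq_eLpNorm_sq, ← variance_id_gaussianReal (μ := 0) (v := v),
      ofReal_variance (memLp_id_gaussianReal 2), evariance_eq_lintegral_ofReal]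
    simp only [id_eq, integral_id_gaussianReal, sub_zero]
  refine (ENNReal.pow_right_strictMono two_ne_zero).injective ?_
  rw [hvar, ← ENNReal.ofReal_pow hσ]
  rfl

lemma eLpNorm_add_prod_le {α β E : Type*} [MeasurableSpace α] [MeasurableSpace β]
    [NormedAddCommGroup E] {μ : Measure α} {ν : Measure β} [IsProbabilityMeasure μ]
    [IsProbabilityMeasure ν] {p : ℝ≥0∞} (hp : 1 ≤ p) {F : α → E} {G : β → E}
    (hF : AEStronglyMeasurable F μ) (hG : AEStronglyMeasurable G ν) :
    eLpNorm (fun z : α × β => F z.1 + G z.2) p (μ.prod ν) ≤ eLpNorm F p μ + eLpNorm G p ν := by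
  have hfst := measurePreserving_fst (μ := μ) (ν := ν)
  have hsnd := measurePreserving_snd (μ := μ) (ν := ν)
  rw [← eLpNorm_comp_measurePreserving hF hfst, ← eLpNorm_comp_measurePreserving hG hsnd]
  exact eLpNorm_add_le (hF.comp_measurePreserving hfst) (hG.comp_measurePreserving hsnd) hp

lemma eLpNorm_add_gaussianReal_sub_fst_le {μ : Measure ℝ} [IsProbabilityMeasure μ] {h : ℝ → ℝ}
    (hh : Measurable h) {σ : ℝ} (hσ : 0 ≤ σ) :
    eLpNorm ((fun z : ℝ × ℝ => h z.1 + z.2) - Prod.fst) 2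
        (μ.prod (gaussianReal 0 ⟨σ ^ 2, sq_nonneg σ⟩)) ≤
      eLpNorm (id - h) 2 μ + ENNReal.ofReal σ := by
  -- instance search does not see through the bare subtype constructor `⟨σ ^ 2, _⟩ : ℝ≥0`
  set v : NNReal := ⟨σ ^ 2, sq_nonneg σ⟩
  have hsplit : (fun z : ℝ × ℝ => h z.1 + z.2) - Prod.fst
      = fun z : ℝ × ℝ => (h - id : ℝ → ℝ) z.1 + id z.2 := by
    ext z
    simp only [Pi.sub_apply, id_eq]
    ring
  rw [hsplit, eLpNorm_sub_comm, ← eLpNorm_id_gaussianReal hσ]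
  exact eLpNorm_add_prod_le (F := h - id) (G := id) one_le_two
    (hh.sub measurable_id).aestronglyMeasurable aestronglyMeasurable_id

lemma Finset.sum_comp_equivFin_symm {ι M : Type*} [AddCommMonoid M] (s : Finset ι) (G : ι → M) :
    ∑ k, G (s.equivFin.symm k) = ∑ c ∈ s, G c := by
  rw [Equiv.sum_comp s.equivFin.symm (fun c => G c), Finset.sum_coe_sort]

namespace MeasureTheory.SimpleFunc

lemma map_add_prod_eq_sum {α G : Type*} [MeasurableSpace α] [MeasurableSpace G]
    [Add G] [MeasurableAdd₂ G] (f : SimpleFunc α G) (μ : Measure α) (ν : Measure G) [SFinite ν] :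
    (μ.prod ν).map (fun z => f z.1 + z.2) = ∑ c ∈ f.range, μ (f ⁻¹' {c}) • ν.map (c + ·) := by
  have hm : Measurable fun z : α × G => f z.1 + z.2 := by fun_prop
  ext S hS
  have hslice : ∀ x, ν (Prod.mk x ⁻¹' ((fun z : α × G => f z.1 + z.2) ⁻¹' S))
      = f.map (fun c => ν.map (c + ·) S) x := fun x => by
    rw [map_apply, Measure.map_apply (measurable_const_add _) hS]
    rfl
  rw [Measure.map_apply hm hS, Measure.prod_apply (hm hS), Measure.finsetSum_apply]
  simp_rw [hslice]
  rw [lintegral_eq_lintegral, map_lintegral]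
  exact Finset.sum_congr rfl fun c _ => mul_comm _ _

lemma exists_fin_weights_sum_smul_eq {α β M : Type*} [MeasurableSpace α]
    [AddCommMonoid M] [Module ℝ≥0∞ M] (f : SimpleFunc α β) (μ : Measure α)
    [IsProbabilityMeasure μ] (F : β → M) :
    ∃ K : ℕ, 0 < K ∧ ∃ (w : Fin K → ℝ) (m : Fin K → β), (∀ k, 0 ≤ w k) ∧ ∑ k, w k = 1 ∧
      ∑ k, ENNReal.ofReal (w k) • F (m k) = ∑ c ∈ f.range, μ (f ⁻¹' {c}) • F c := by
  obtain ⟨x⟩ := nonempty_of_isProbabilityMeasure μ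
  set m : Fin f.range.card → β := fun k => f.range.equivFin.symm k
  have hofReal : ∀ c, ENNReal.ofReal (μ (f ⁻¹' {c})).toReal = μ (f ⁻¹' {c}) :=
    fun c => ENNReal.ofReal_toReal (measure_ne_top μ _)
  refine ⟨f.range.card, Finset.card_pos.2 ⟨f x, f.mem_range_self x⟩,
    fun k => (μ (f ⁻¹' {m k})).toReal, m, fun k => ENNReal.toReal_nonneg, ?_, ?_⟩
  · rw [← ENNReal.toReal_sum (fun k _ => measure_ne_top μ _),
      Finset.sum_comp_equivFin_symm f.range (fun c => μ (f ⁻¹' {c})),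
      sum_range_measure_preimage_singleton, measure_univ, ENNReal.toReal_one]
  · dsimp only
    simp only [hofReal]
    exact Finset.sum_comp_equivFin_symm f.range (fun c => μ (f ⁻¹' {c}) • F c)

end MeasureTheory.SimpleFunc

/-- The family of finite Gaussian mixtures is dense in (P₂(ℝ), W₂). -/
theorem gaussianMixtures_dense_in_P2_W2
    (g : Measure ℝ) (hg : MemP2 g) (ε : ℝ) (hε : 0 < ε) :
    ∃ K : ℕ, 0 < K ∧
      ∃ (w : Fin K → ℝ) (m : Fin K → ℝ) (s : Fin K → ℝ),
        (∀ k, 0 ≤ w k) ∧ (∑ k, w k = 1) ∧ (∀ k, 0 < s k) ∧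
        W2 (∑ k, ENNReal.ofReal (w k) • gaussianReal (m k) ⟨s k ^ 2, sq_nonneg _⟩) g < ε := by
  have : IsProbabilityMeasure g := hg.1
  obtain ⟨f, hf, -⟩ := hg.memLp_id.exists_simpleFunc_eLpNorm_sub_lt ENNReal.ofNat_ne_top
    (ENNReal.ofReal_pos.2 (half_pos hε)).ne'
  set v : NNReal := ⟨(ε / 2) ^ 2, sq_nonneg _⟩
  obtain ⟨K, hK, w, m, hw, hw1, hmix⟩ :=
    f.exists_fin_weights_sum_smul_eq g (fun c => gaussianReal c v)
  refine ⟨K, hK, w, m, fun _ => ε / 2, hw, hw1, fun _ => half_pos hε, ?_⟩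
  have hconv : (g.prod (gaussianReal 0 v)).map (fun z => f z.1 + z.2)
      = ∑ k, ENNReal.ofReal (w k) • gaussianReal (m k) v := by
    rw [hmix, f.map_add_prod_eq_sum]
    refine Finset.sum_congr rfl fun c _ => ?_
    rw [gaussianReal_map_const_add, zero_add]
  have hlt : eLpNorm ((fun z => f z.1 + z.2) - Prod.fst) 2 (g.prod (gaussianReal 0 v))
      < ENNReal.ofReal ε := by
    refine (eLpNorm_add_gaussianReal_sub_fst_le f.measurable (half_pos hε).le).trans_lt ?_
    calc _ < ENNReal.ofReal (ε / 2) + ENNReal.ofReal (ε / 2) :=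
          ENNReal.add_lt_add_right ENNReal.ofReal_ne_top hf
      _ = ENNReal.ofReal ε := by
          rw [← ENNReal.ofReal_add (half_pos hε).le (half_pos hε).le, add_halves]
  have := W2_map_lt_of_eLpNorm_sub_lt (X := fun z : ℝ × ℝ => f z.1 + z.2) _
    ((f.measurable.comp measurable_fst).add measurable_snd) measurable_fst hlt
  rwa [hconv, measurePreserving_fst.map_eq] at this
end

section
/- (Uniform approximation on compact covariate domains.) Let X ⊂ ℝ^p be compact and let H : X → P₂(ℝ) be Lipschitz with respect to W₂, i.e., there is L > 0 with W₂(H(x₁), H(x₂)) ≤ L‖x₁ − x₂‖₂ for all x₁, x₂ ∈ X. Then for every ε > 0 there exist a positive integer K and step functions (piecewise constant functions taking finitely many values on a finite measurable partition of X) π_k : X → [0,1] with Σ_{k=1}^K π_k(x) = 1 for all x, μ_k : X → ℝ, and σ_k : X → (0,∞), k = 1,…,K, such that sup_{x ∈ X} W₂(H(x), Σ_{k=1}^K π_k(x) N(μ_k(x), σ_k²(x))) < ε. -/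
open MeasureTheory ProbabilityTheory ENNReal Filter

/-- A step function: a function with finitely many values whose level sets are measurable,
i.e. constant on each cell of a finite measurable partition of the domain. -/
def IsStepFun {α β : Type*} [MeasurableSpace α] (f : α → β) : Prop :=
  (Set.range f).Finite ∧ ∀ b : β, MeasurableSet (f ⁻¹' {b})

open Topology

/-! ### step function lemmas -/

lemma isStepFun_const {α β : Type*} [MeasurableSpace α] (b : β) :
    IsStepFun (fun _ : α => b) := by
  constructor
  · exact (Set.finite_singleton b).subset (by rintro y ⟨x, rfl⟩; simp)
  · intro c
    rcases eq_or_ne b c with h | h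
    · convert MeasurableSet.univ; ext x; simp [h]
    · convert MeasurableSet.empty; ext x; simp [h]

lemma IsStepFun.comp' {α β γ : Type*} [MeasurableSpace α] {g : α → β} (hg : IsStepFun g)
    (W : β → γ) : IsStepFun (fun x => W (g x)) := by
  classical
  obtain ⟨hfin, hmeas⟩ := hg
  constructor
  · exact (hfin.image W).subset (by rintro y ⟨x, rfl⟩; exact ⟨g x, ⟨x, rfl⟩, rfl⟩)
  · intro b
    have hset : (fun x => W (g x)) ⁻¹' {b}
        = ⋃ c ∈ hfin.toFinset.filter (fun c => W c = b), g ⁻¹' {c} := by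
      ext x
      simp only [Set.mem_preimage, Set.mem_singleton_iff, Set.mem_iUnion, Finset.mem_filter,
        Set.Finite.mem_toFinset]
      constructor
      · intro h; exact ⟨g x, ⟨⟨x, rfl⟩, h⟩, rfl⟩
      · rintro ⟨cc, ⟨_, hW⟩, (hc : g x = cc)⟩; rw [hc]; exact hW
    rw [hset]
    exact (hfin.toFinset.filter _).measurableSet_biUnion (fun c _ => hmeas c)

/-! ### basic W2sq lemmas -/

lemma W2sq_le_coupling {μ ν : Measure ℝ} (γ : Measure (ℝ × ℝ))
    (hγ : IsProbabilityMeasure γ) (h1 : γ.map Prod.fst = μ) (h2 : γ.map Prod.snd = ν) :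
    W2sq μ ν ≤ ∫⁻ q, ENNReal.ofReal ((q.1 - q.2) ^ 2) ∂γ :=
  iInf_le_of_le γ <| iInf_le_of_le hγ <| iInf_le_of_le h1 <| iInf_le_of_le h2 le_rfl

lemma exists_coupling_lt {μ ν : Measure ℝ} {b : ℝ≥0∞} (h : W2sq μ ν < b) :
    ∃ γ : Measure (ℝ × ℝ), IsProbabilityMeasure γ ∧ γ.map Prod.fst = μ ∧ γ.map Prod.snd = ν ∧
      ∫⁻ q, ENNReal.ofReal ((q.1 - q.2) ^ 2) ∂γ < b := by
  rw [W2sq] at h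
  simp only [iInf_lt_iff] at h
  obtain ⟨γ, hp, h1, h2, hI⟩ := h
  exact ⟨γ, hp, h1, h2, hI⟩

lemma W2sq_lt_top {μ ν : Measure ℝ} (hμ : MemP2 μ) (hν : MemP2 ν) : W2sq μ ν < ⊤ := by
  obtain ⟨hμp, hμ2⟩ := hμ; obtain ⟨hνp, hν2⟩ := hν
  haveI := hμp; haveI := hνp
  have hmeas : Measurable fun x : ℝ => ENNReal.ofReal (2 * x ^ 2) :=
    ENNReal.measurable_ofReal.comp ((measurable_id.pow_const 2).const_mul 2)
  refine lt_of_le_of_lt (W2sq_le_coupling (μ.prod ν) inferInstance ?_ ?_) ?_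
  · rw [Measure.map_fst_prod, measure_univ, one_smul]
  · rw [Measure.map_snd_prod, measure_univ, one_smul]
  · have hle : ∫⁻ q, ENNReal.ofReal ((q.1 - q.2) ^ 2) ∂(μ.prod ν)
        ≤ ∫⁻ q : ℝ × ℝ, (ENNReal.ofReal (2 * q.1 ^ 2) + ENNReal.ofReal (2 * q.2 ^ 2))
            ∂(μ.prod ν) := by
      refine lintegral_mono fun q => ?_
      rw [← ENNReal.ofReal_add (by positivity) (by positivity)]
      exact ENNReal.ofReal_le_ofReal (by nlinarith [sq_nonneg (q.1 + q.2)])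
    refine lt_of_le_of_lt hle ?_
    rw [lintegral_add_left (μ := μ.prod ν) (f := fun q : ℝ × ℝ => ENNReal.ofReal (2 * q.1 ^ 2)) (hmeas.comp measurable_fst)]
    have e1 : ∫⁻ q : ℝ × ℝ, ENNReal.ofReal (2 * q.1 ^ 2) ∂(μ.prod ν)
        = ∫⁻ x, ENNReal.ofReal (2 * x ^ 2) ∂μ := by
      rw [← lintegral_map hmeas measurable_fst, Measure.map_fst_prod, measure_univ, one_smul]
    have e2 : ∫⁻ q : ℝ × ℝ, ENNReal.ofReal (2 * q.2 ^ 2) ∂(μ.prod ν)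
        = ∫⁻ x, ENNReal.ofReal (2 * x ^ 2) ∂ν := by
      rw [← lintegral_map hmeas measurable_snd, Measure.map_snd_prod, measure_univ, one_smul]
    have e3 : ∀ ρ : Measure ℝ, (∫⁻ x, ENNReal.ofReal (x ^ 2) ∂ρ) < ⊤ →
        (∫⁻ x, ENNReal.ofReal (2 * x ^ 2) ∂ρ) < ⊤ := by
      intro ρ hρ
      have : ∀ x : ℝ, ENNReal.ofReal (2 * x ^ 2) = 2 * ENNReal.ofReal (x ^ 2) := by
        intro x
        rw [ENNReal.ofReal_mul (by norm_num)]
        norm_num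
      simp_rw [this]
      rw [lintegral_const_mul (r := 2) (f := fun x : ℝ => ENNReal.ofReal (x ^ 2))
          (by exact ENNReal.measurable_ofReal.comp (measurable_id.pow_const 2))]
      exact ENNReal.mul_lt_top (by norm_num) hρ
    rw [e1, e2]
    exact ENNReal.add_lt_top.2 ⟨e3 μ hμ2, e3 ν hν2⟩

lemma W2sq_le_ofReal {μ ν : Measure ℝ} (hfin : W2sq μ ν ≠ ⊤) {r : ℝ} (hr : 0 ≤ r)
    (h : W2 μ ν ≤ r) : W2sq μ ν ≤ ENNReal.ofReal (r ^ 2) := by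
  have h0 : (0 : ℝ) ≤ (W2sq μ ν).toReal := ENNReal.toReal_nonneg
  have hsq : (W2sq μ ν).toReal ≤ r ^ 2 := by
    have h1 : Real.sqrt (W2sq μ ν).toReal ^ 2 = (W2sq μ ν).toReal := Real.sq_sqrt h0
    have h2 : Real.sqrt (W2sq μ ν).toReal ^ 2 ≤ r ^ 2 :=
      pow_le_pow_left₀ (Real.sqrt_nonneg _) h 2
    linarith
  rw [← ENNReal.ofReal_toReal hfin]
  exact ENNReal.ofReal_le_ofReal hsq

lemma W2_lt_of_W2sq_lt {μ ν : Measure ℝ} {r : ℝ} (hr : 0 < r)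
    (h : W2sq μ ν < ENNReal.ofReal (r ^ 2)) : W2 μ ν < r := by
  rw [W2, show r = Real.sqrt (r ^ 2) by rw [Real.sqrt_sq hr.le]]
  apply Real.sqrt_lt_sqrt ENNReal.toReal_nonneg
  rwa [← ENNReal.lt_ofReal_iff_toReal_lt h.ne_top]
/-! ### gaussian lemmas -/

lemma gaussianReal_affine (r σ : ℝ) :
    (gaussianReal 0 1).map (fun z => r + σ * z) = gaussianReal r ⟨σ ^ 2, sq_nonneg σ⟩ := by
  have hc : (fun z : ℝ => r + σ * z) = (· + r) ∘ (σ * ·) := by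
    funext z; simp [Function.comp, add_comm]
  rw [hc, ← Measure.map_map (measurable_add_const r) (measurable_const_mul σ),
    gaussianReal_map_const_mul, gaussianReal_map_add_const]
  norm_num
  rfl

lemma gaussian_moment_lt_top : ∫⁻ z, ENNReal.ofReal (z ^ 2) ∂(gaussianReal 0 1) < ⊤ := by
  have hpdf : Measurable (gaussianPDF 0 1) := measurable_gaussianPDF 0 1
  have hsq : Measurable fun z : ℝ => ENNReal.ofReal (z ^ 2) :=
    ENNReal.measurable_ofReal.comp (measurable_id.pow_const 2)
  rw [gaussianReal_of_var_ne_zero _ one_ne_zero,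
    lintegral_withDensity_eq_lintegral_mul _ hpdf hsq]
  have key : Integrable fun z : ℝ => z ^ (2 : ℕ) * Real.exp (-(2⁻¹ : ℝ) * z ^ 2) := by
    have h2 := integrable_rpow_mul_exp_neg_mul_sq (b := (2 : ℝ)⁻¹) (by norm_num)
      (s := 2) (by norm_num)
    refine h2.congr ?_
    refine Filter.EventuallyEq.of_eq (funext fun x => ?_)
    rw [show ((2 : ℝ) : ℝ) = ((2 : ℕ) : ℝ) by norm_num, Real.rpow_natCast]
  have hint : Integrable fun z : ℝ => gaussianPDFReal 0 1 z * z ^ 2 := by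
    have heq : (fun z : ℝ => gaussianPDFReal 0 1 z * z ^ 2)
        = fun z : ℝ => (Real.sqrt (2 * Real.pi * ((1 : NNReal) : ℝ)))⁻¹ *
            (z ^ (2 : ℕ) * Real.exp (-(2⁻¹ : ℝ) * z ^ 2)) := by
      funext z
      rw [gaussianPDFReal]
      rw [show -(z - 0) ^ 2 / (2 * ((1 : NNReal) : ℝ)) = -(2⁻¹ : ℝ) * z ^ 2 by
        push_cast; ring]
      ring
    rw [heq]
    exact key.const_mul _
  have heq2 : (fun z : ℝ => (gaussianPDF 0 1 * fun z : ℝ => ENNReal.ofReal (z ^ 2)) z)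
      = fun z : ℝ => ENNReal.ofReal (gaussianPDFReal 0 1 z * z ^ 2) := by
    funext z
    simp only [Pi.mul_apply, gaussianPDF]
    rw [← ENNReal.ofReal_mul (gaussianPDFReal_nonneg _ _ _)]
  rw [heq2]
  exact hint.lintegral_lt_top

/-! ### finite range decomposition -/

lemma finite_range_decomp {f : ℝ → ℝ} {R : Finset ℝ} (hfR : ∀ v, f v ∈ R) (h : ℝ → ℝ≥0∞) :
    (fun v => h (f v)) = fun v => ∑ r ∈ R, (f ⁻¹' {r}).indicator (fun _ => h r) v := by
  funext v
  rw [Finset.sum_eq_single (f v)]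
  · rw [Set.indicator_of_mem (by simp : v ∈ f ⁻¹' {f v})]
  · intro r _ hr
    rw [Set.indicator_of_notMem
      (by simp only [Set.mem_preimage, Set.mem_singleton_iff]; exact fun hh => hr hh.symm)]
  · exact fun h' => absurd (hfR v) h'

lemma comp_finite_measurable {f : ℝ → ℝ} (hf : Measurable f) {R : Finset ℝ}
    (hfR : ∀ v, f v ∈ R) (h : ℝ → ℝ≥0∞) : Measurable fun v => h (f v) := by
  rw [finite_range_decomp hfR h]
  exact Finset.measurable_sum _ fun r _ =>
    (measurable_const.indicator (hf (measurableSet_singleton r)))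

lemma lintegral_comp_finite {ν : Measure ℝ} {f : ℝ → ℝ} (hf : Measurable f)
    {R : Finset ℝ} (hfR : ∀ v, f v ∈ R) (h : ℝ → ℝ≥0∞) :
    ∫⁻ v, h (f v) ∂ν = ∑ r ∈ R, ν (f ⁻¹' {r}) * h r := by
  rw [finite_range_decomp hfR h,
    lintegral_finset_sum _ (fun r _ =>
      measurable_const.indicator (hf (measurableSet_singleton r)))]
  refine Finset.sum_congr rfl fun r _ => ?_
  rw [lintegral_indicator (hf (measurableSet_singleton r)), setLIntegral_const]
  exact mul_comm _ _

/-! ### selection index -/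

open Classical in
noncomputable def selIdx {E : Type*} {n : ℕ} (B : Fin n → Set E) (j₀ : Fin n) (x : E) :
    Fin n :=
  if h : (Finset.univ.filter (fun j => x ∈ B j)).Nonempty
    then (Finset.univ.filter (fun j => x ∈ B j)).min' h else j₀

lemma selIdx_mem {E : Type*} {n : ℕ} {B : Fin n → Set E} {j₀ : Fin n} {x : E}
    (h : ∃ j, x ∈ B j) : x ∈ B (selIdx B j₀ x) := by
  classical
  obtain ⟨j, hj⟩ := h
  have hS : (Finset.univ.filter (fun j => x ∈ B j)).Nonempty :=
    ⟨j, by simp [hj]⟩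
  rw [selIdx]
  rw [dif_pos hS]
  have := (Finset.univ.filter (fun j => x ∈ B j)).min'_mem hS
  simpa using this

lemma selIdx_isStepFun {E : Type*} [MeasurableSpace E] {n : ℕ} (B : Fin n → Set E)
    (hB : ∀ j, MeasurableSet (B j)) (j₀ : Fin n) : IsStepFun (selIdx B j₀) := by
  classical
  refine ⟨Set.finite_univ.subset (Set.subset_univ _), fun j => ?_⟩
  have hset : selIdx B j₀ ⁻¹' {j} =
      (B j ∩ ⋂ (j' : Fin n) (_ : j' < j), (B j')ᶜ)
        ∪ ((⋂ j' : Fin n, (B j')ᶜ) ∩ {x : E | j₀ = j}) := by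
    ext x
    simp only [Set.mem_preimage, Set.mem_singleton_iff, Set.mem_union, Set.mem_inter_iff,
      Set.mem_iInter, Set.mem_compl_iff, Set.mem_setOf_eq]
    rw [selIdx]
    by_cases hS : (Finset.univ.filter (fun j' => x ∈ B j')).Nonempty
    · rw [dif_pos hS]
      set S := Finset.univ.filter (fun j' => x ∈ B j') with hSdef
      constructor
      · intro hj
        left
        have hmem := S.min'_mem hS
        rw [hj] at hmem
        simp only [hSdef, Finset.mem_filter, Finset.mem_univ, true_and] at hmem
        refine ⟨hmem, fun j' hj' hxj' => ?_⟩
        have : j' ∈ S := by simp [hSdef, hxj']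
        have := S.min'_le j' this
        rw [hj] at this
        exact absurd hj' (not_lt.2 this)
      · rintro (⟨hxj, hlt⟩ | ⟨hall, _⟩)
        · have hjS : j ∈ S := by simp [hSdef, hxj]
          have h1 := S.min'_le j hjS
          have hmem := S.min'_mem hS
          simp only [hSdef, Finset.mem_filter, Finset.mem_univ, true_and] at hmem
          rcases lt_or_eq_of_le h1 with h2 | h2
          · exact absurd hmem (hlt _ h2)
          · exact h2
        · obtain ⟨j'', hj''⟩ := hS
          simp only [hSdef, Finset.mem_filter, Finset.mem_univ, true_and] at hj''
          exact absurd hj'' (hall j'')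
    · rw [dif_neg hS]
      have hx : ∀ j', x ∉ B j' := by
        intro j' hmem
        exact hS ⟨j', by simp [hmem]⟩
      constructor
      · rintro rfl
        right
        exact ⟨hx, rfl⟩
      · rintro (⟨hmem, _⟩ | ⟨_, hj⟩)
        · exact absurd hmem (hx j)
        · exact hj
  rw [hset]
  refine MeasurableSet.union ?_ ?_
  · exact (hB j).inter (MeasurableSet.iInter fun j' => MeasurableSet.iInter fun _ => (hB j').compl)
  · refine (MeasurableSet.iInter fun j' => (hB j').compl).inter ?_
    by_cases h : j₀ = j
    · simp only [h, Set.setOf_true]; exact MeasurableSet.univ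
    · simp only [h, Set.setOf_false]; exact MeasurableSet.empty

/-! ### discretization -/

noncomputable def disc (n : ℕ) (x : ℝ) : ℝ :=
  if |x| ≤ (n : ℝ) + 1 then (⌊x * ((n : ℝ) + 1)⌋ : ℝ) / ((n : ℝ) + 1) else 0

lemma disc_measurable (n : ℕ) : Measurable (disc n) := by
  unfold disc
  refine Measurable.ite (measurableSet_le measurable_id.abs measurable_const) ?_
    measurable_const
  exact (measurable_from_top.comp ((measurable_id.mul_const _).floor)).div_const _

lemma disc_range_finite (n : ℕ) : (Set.range (disc n)).Finite := by
  apply Set.Finite.subset (Set.Finite.union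
    (Set.Finite.image (fun k : ℤ => (k : ℝ) / ((n : ℝ) + 1))
      (Set.finite_Icc (-(((n : ℤ) + 1) ^ 2 + 1)) (((n : ℤ) + 1) ^ 2 + 1)))
    (Set.finite_singleton 0))
  rintro y ⟨x, rfl⟩
  unfold disc
  split_ifs with h
  · left
    refine ⟨⌊x * ((n : ℝ) + 1)⌋, ?_, rfl⟩
    have hn : (0 : ℝ) < (n : ℝ) + 1 := by positivity
    have hb : |x * ((n : ℝ) + 1)| ≤ ((n : ℝ) + 1) ^ 2 := by
      rw [abs_mul, abs_of_nonneg hn.le]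
      nlinarith [abs_nonneg x]
    obtain ⟨hb1, hb2⟩ := abs_le.1 hb
    rw [Set.mem_Icc]
    constructor
    · apply Int.le_floor.2
      push_cast
      nlinarith
    · have h1 := Int.floor_le (x * ((n : ℝ) + 1))
      have h2 : (⌊x * ((n : ℝ) + 1)⌋ : ℝ) ≤ ((((n : ℤ) + 1) ^ 2 + 1 : ℤ) : ℝ) := by
        push_cast
        nlinarith
      exact_mod_cast h2
  · right; simp

lemma disc_close {n : ℕ} {x : ℝ} (h : |x| ≤ (n : ℝ) + 1) :
    |x - disc n x| ≤ 1 / ((n : ℝ) + 1) := by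
  unfold disc
  rw [if_pos h]
  have hn : (0 : ℝ) < (n : ℝ) + 1 := by positivity
  have h1 : (⌊x * ((n : ℝ) + 1)⌋ : ℝ) ≤ x * ((n : ℝ) + 1) := Int.floor_le _
  have h2 : x * ((n : ℝ) + 1) < ⌊x * ((n : ℝ) + 1)⌋ + 1 := Int.lt_floor_add_one _
  have heq : x - (⌊x * ((n : ℝ) + 1)⌋ : ℝ) / ((n : ℝ) + 1)
      = (x * ((n : ℝ) + 1) - ⌊x * ((n : ℝ) + 1)⌋) / ((n : ℝ) + 1) := by
    field_simp
  rw [heq, abs_div, abs_of_pos hn]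
  gcongr
  rw [abs_le]
  constructor <;> linarith

lemma disc_bound (n : ℕ) (x : ℝ) : (x - disc n x) ^ 2 ≤ x ^ 2 + 1 := by
  by_cases h : |x| ≤ (n : ℝ) + 1
  · have hc := disc_close h
    have hn : (0 : ℝ) < (n : ℝ) + 1 := by positivity
    have h1 : (1 : ℝ) / ((n : ℝ) + 1) ≤ 1 := by
      rw [div_le_one hn]; linarith [show (0:ℝ) ≤ (n:ℝ) from Nat.cast_nonneg n]
    have h2 : |x - disc n x| ≤ 1 := le_trans hc h1
    nlinarith [sq_abs (x - disc n x), abs_nonneg (x - disc n x), sq_nonneg x]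
  · have h0 : disc n x = 0 := by unfold disc; rw [if_neg h]
    rw [h0]
    nlinarith

lemma disc_tendsto (μ : Measure ℝ) [IsProbabilityMeasure μ]
    (hμ2 : (∫⁻ x, ENNReal.ofReal (x ^ 2) ∂μ) < ⊤) :
    Tendsto (fun n => ∫⁻ x, ENNReal.ofReal ((x - disc n x) ^ 2) ∂μ) atTop (𝓝 0) := by
  have h0 : (0 : ℝ≥0∞) = ∫⁻ _x : ℝ, (0 : ℝ≥0∞) ∂μ := by simp
  rw [h0]
  apply tendsto_lintegral_of_dominated_convergence (bound := fun x => ENNReal.ofReal (x ^ 2 + 1))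
  · intro n
    exact ENNReal.measurable_ofReal.comp ((measurable_id.sub (disc_measurable n)).pow_const 2)
  · intro n
    exact Filter.Eventually.of_forall fun x => ENNReal.ofReal_le_ofReal (disc_bound n x)
  · have heq : ∫⁻ x, ENNReal.ofReal (x ^ 2 + 1) ∂μ
        = (∫⁻ x, ENNReal.ofReal (x ^ 2) ∂μ) + 1 := by
      have : ∀ x : ℝ, ENNReal.ofReal (x ^ 2 + 1)
          = ENNReal.ofReal (x ^ 2) + ENNReal.ofReal 1 :=
        fun x => ENNReal.ofReal_add (sq_nonneg _) zero_le_one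
      simp_rw [this]
      rw [lintegral_add_right _ measurable_const, lintegral_const, measure_univ, mul_one,
        ENNReal.ofReal_one]
    rw [heq]
    exact (ENNReal.add_lt_top.2 ⟨hμ2, ENNReal.one_lt_top⟩).ne
  · refine Filter.Eventually.of_forall fun x => ?_
    have hev : ∀ᶠ n : ℕ in atTop,
        ENNReal.ofReal ((x - disc n x) ^ 2) ≤ ENNReal.ofReal ((1 : ℝ) / ((n : ℝ) + 1)) := by
      filter_upwards [eventually_ge_atTop ⌈|x|⌉₊] with n hn
      have hx : |x| ≤ (n : ℝ) + 1 := by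
        calc |x| ≤ (⌈|x|⌉₊ : ℝ) := Nat.le_ceil _
        _ ≤ (n : ℝ) := Nat.cast_le.2 hn
        _ ≤ (n : ℝ) + 1 := by linarith
      have hc := disc_close hx
      apply ENNReal.ofReal_le_ofReal
      have hn1 : (0 : ℝ) < (n : ℝ) + 1 := by positivity
      have h1 : (1 : ℝ) / ((n : ℝ) + 1) ≤ 1 := by
        rw [div_le_one hn1]; linarith [show (0:ℝ) ≤ (n:ℝ) from Nat.cast_nonneg n]
      nlinarith [abs_nonneg (x - disc n x), sq_abs (x - disc n x)]
    refine tendsto_of_tendsto_of_tendsto_of_le_of_le' tendsto_const_nhds ?_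
      (Filter.Eventually.of_forall fun n => zero_le) hev
    have ht : Tendsto (fun n : ℕ => (1 : ℝ) / ((n : ℝ) + 1)) atTop (𝓝 0) :=
      tendsto_one_div_add_atTop_nhds_zero_nat
    have := ENNReal.tendsto_ofReal ht
    simpa using this

/-! ### key estimate -/

lemma key_estimate {μ ν : Measure ℝ} [IsProbabilityMeasure μ] [IsProbabilityMeasure ν]
    (γ₀ : Measure (ℝ × ℝ)) [IsProbabilityMeasure γ₀]
    (h1 : γ₀.map Prod.fst = μ) (h2 : γ₀.map Prod.snd = ν)
    {f : ℝ → ℝ} (hf : Measurable f) {R : Finset ℝ} (hfR : ∀ v, f v ∈ R) (σ : ℝ) :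
    W2sq μ (∑ r ∈ R, ν (f ⁻¹' {r}) • gaussianReal r ⟨σ ^ 2, sq_nonneg σ⟩)
      ≤ 4 * (∫⁻ q, ENNReal.ofReal ((q.1 - q.2) ^ 2) ∂γ₀)
        + 4 * (∫⁻ v, ENNReal.ofReal ((v - f v) ^ 2) ∂ν)
        + ENNReal.ofReal (2 * σ ^ 2) * ∫⁻ z, ENNReal.ofReal (z ^ 2) ∂(gaussianReal 0 1) := by
  set N := gaussianReal 0 1 with hN
  set C := ∫⁻ z, ENNReal.ofReal (z ^ 2) ∂N with hCdef
  set φ : (ℝ × ℝ) × ℝ → ℝ × ℝ := fun q => (q.1.1, f q.1.2 + σ * q.2) with hφdef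
  have hψ : Measurable fun q : (ℝ × ℝ) × ℝ => f q.1.2 + σ * q.2 :=
    (hf.comp (measurable_snd.comp measurable_fst)).add (measurable_snd.const_mul σ)
  have hφ : Measurable φ := (measurable_fst.comp measurable_fst).prodMk hψ
  set γ := (γ₀.prod N).map φ with hγdef
  haveI hγp : IsProbabilityMeasure γ := Measure.isProbabilityMeasure_map hφ.aemeasurable
  have hsqm : Measurable fun z : ℝ => ENNReal.ofReal (z ^ 2) :=
    ENNReal.measurable_ofReal.comp (measurable_id.pow_const 2)
  have hcost : Measurable fun q : ℝ × ℝ => ENNReal.ofReal ((q.1 - q.2) ^ 2) :=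
    ENNReal.measurable_ofReal.comp ((measurable_fst.sub measurable_snd).pow_const 2)
  have hvfm : Measurable fun v : ℝ => ENNReal.ofReal ((v - f v) ^ 2) :=
    ENNReal.measurable_ofReal.comp ((measurable_id.sub hf).pow_const 2)
  -- first marginal
  have hfst : γ.map Prod.fst = μ := by
    rw [hγdef, Measure.map_map measurable_fst hφ]
    have hcomp : (Prod.fst ∘ φ) = (Prod.fst ∘ (Prod.fst : (ℝ × ℝ) × ℝ → ℝ × ℝ)) := rfl
    rw [hcomp, ← Measure.map_map measurable_fst measurable_fst, Measure.map_fst_prod,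
      measure_univ, one_smul, h1]
  -- second marginal
  have hsnd : γ.map Prod.snd = ∑ r ∈ R, ν (f ⁻¹' {r}) • gaussianReal r ⟨σ ^ 2, sq_nonneg σ⟩ := by
    ext E hE
    set h : ℝ → ℝ≥0∞ := fun r => N ((fun z => r + σ * z) ⁻¹' E) with hhdef
    have hhm : Measurable fun v => h (f v) := comp_finite_measurable hf hfR h
    rw [Measure.map_apply measurable_snd hE, hγdef, Measure.map_apply hφ (measurable_snd hE),
      Measure.prod_apply (hφ (measurable_snd hE))]
    have hintg : (fun uv : ℝ × ℝ => N (Prod.mk uv ⁻¹' (φ ⁻¹' (Prod.snd ⁻¹' E))))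
        = fun uv : ℝ × ℝ => h (f uv.2) := rfl
    rw [hintg]
    have hmapped : ∫⁻ uv : ℝ × ℝ, h (f uv.2) ∂γ₀ = ∫⁻ v, h (f v) ∂ν := by
      rw [← h2, lintegral_map hhm measurable_snd]
    rw [hmapped, lintegral_comp_finite hf hfR h]
    rw [Measure.finset_sum_apply]
    refine Finset.sum_congr rfl fun r _ => ?_
    rw [Measure.smul_apply, smul_eq_mul]
    congr 1
    rw [hhdef]
    rw [← gaussianReal_affine r σ, Measure.map_apply ((measurable_const_mul σ).const_add r) hE]
  -- cost estimate
  refine le_trans (W2sq_le_coupling γ hγp hfst hsnd) ?_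
  rw [hγdef, lintegral_map hcost hφ]
  have hbig : Measurable fun q : (ℝ × ℝ) × ℝ =>
      ENNReal.ofReal ((q.1.1 - (f q.1.2 + σ * q.2)) ^ 2) :=
    ENNReal.measurable_ofReal.comp (((measurable_fst.comp measurable_fst).sub hψ).pow_const 2)
  rw [lintegral_prod _ hbig.aemeasurable]
  have hinner : ∀ uv : ℝ × ℝ,
      (∫⁻ z, ENNReal.ofReal ((uv.1 - (f uv.2 + σ * z)) ^ 2) ∂N)
        ≤ ENNReal.ofReal (4 * (uv.1 - uv.2) ^ 2) + ENNReal.ofReal (4 * (uv.2 - f uv.2) ^ 2)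
          + ENNReal.ofReal (2 * σ ^ 2) * C := by
    intro uv
    have step1 : (∫⁻ z, ENNReal.ofReal ((uv.1 - (f uv.2 + σ * z)) ^ 2) ∂N)
        ≤ ∫⁻ z, (ENNReal.ofReal (2 * (uv.1 - f uv.2) ^ 2)
            + ENNReal.ofReal (2 * σ ^ 2) * ENNReal.ofReal (z ^ 2)) ∂N := by
      refine lintegral_mono fun z => ?_
      rw [← ENNReal.ofReal_mul (by positivity),
        ← ENNReal.ofReal_add (by positivity) (by positivity)]
      exact ENNReal.ofReal_le_ofReal (by nlinarith [sq_nonneg ((uv.1 - f uv.2) + σ * z)])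
    have step2 : (∫⁻ z, (ENNReal.ofReal (2 * (uv.1 - f uv.2) ^ 2)
          + ENNReal.ofReal (2 * σ ^ 2) * ENNReal.ofReal (z ^ 2)) ∂N)
        = ENNReal.ofReal (2 * (uv.1 - f uv.2) ^ 2) + ENNReal.ofReal (2 * σ ^ 2) * C := by
      rw [lintegral_add_left measurable_const, lintegral_const, measure_univ, mul_one,
        lintegral_const_mul _ hsqm]
    have step3 : ENNReal.ofReal (2 * (uv.1 - f uv.2) ^ 2)
        ≤ ENNReal.ofReal (4 * (uv.1 - uv.2) ^ 2) + ENNReal.ofReal (4 * (uv.2 - f uv.2) ^ 2) := by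
      rw [← ENNReal.ofReal_add (by positivity) (by positivity)]
      exact ENNReal.ofReal_le_ofReal (by nlinarith [sq_nonneg ((uv.1 - uv.2) - (uv.2 - f uv.2))])
    calc (∫⁻ z, ENNReal.ofReal ((uv.1 - (f uv.2 + σ * z)) ^ 2) ∂N)
        ≤ ENNReal.ofReal (2 * (uv.1 - f uv.2) ^ 2) + ENNReal.ofReal (2 * σ ^ 2) * C := by
          rw [← step2]; exact step1
      _ ≤ _ := add_le_add_left step3 _
  refine le_trans (lintegral_mono hinner) ?_
  have hA : Measurable fun uv : ℝ × ℝ => ENNReal.ofReal (4 * (uv.1 - uv.2) ^ 2) :=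
    ENNReal.measurable_ofReal.comp (((measurable_fst.sub measurable_snd).pow_const 2).const_mul 4)
  have hB : Measurable fun uv : ℝ × ℝ => ENNReal.ofReal (4 * (uv.2 - f uv.2) ^ 2) :=
    ENNReal.measurable_ofReal.comp
      (((measurable_snd.sub (hf.comp measurable_snd)).pow_const 2).const_mul 4)
  rw [lintegral_add_right _ measurable_const, lintegral_add_right _ hB, lintegral_const,
    measure_univ, mul_one]
  have e4 : ∀ t : ℝ, ENNReal.ofReal (4 * t) = 4 * ENNReal.ofReal t := by
    intro t
    rw [ENNReal.ofReal_mul (by norm_num)]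
    norm_num
  have eA : ∫⁻ uv : ℝ × ℝ, ENNReal.ofReal (4 * (uv.1 - uv.2) ^ 2) ∂γ₀
      = 4 * ∫⁻ q, ENNReal.ofReal ((q.1 - q.2) ^ 2) ∂γ₀ := by
    simp_rw [e4]
    rw [lintegral_const_mul _ hcost]
  have eB : ∫⁻ uv : ℝ × ℝ, ENNReal.ofReal (4 * (uv.2 - f uv.2) ^ 2) ∂γ₀
      = 4 * ∫⁻ v, ENNReal.ofReal ((v - f v) ^ 2) ∂ν := by
    simp_rw [e4]
    rw [lintegral_const_mul (r := 4)
      (f := fun uv : ℝ × ℝ => ENNReal.ofReal ((uv.2 - f uv.2) ^ 2))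
      (by exact hvfm.comp measurable_snd), ← h2,
      lintegral_map hvfm measurable_snd]
  rw [eA, eB]

/-- Uniform approximation by conditional Gaussian mixtures with step-function parameters,
on a compact covariate domain, for a W₂-Lipschitz map H into P₂(ℝ). -/
theorem scgmm_uniform_approximation_compact
    (p : ℕ) (X : Set (EuclideanSpace ℝ (Fin p))) (hX : IsCompact X)
    (H : EuclideanSpace ℝ (Fin p) → Measure ℝ)
    (hH : ∀ x ∈ X, MemP2 (H x))
    (L : ℝ) (hL : 0 < L)
    (hLip : ∀ x₁ ∈ X, ∀ x₂ ∈ X, W2 (H x₁) (H x₂) ≤ L * ‖x₁ - x₂‖)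
    (ε : ℝ) (hε : 0 < ε) :
    ∃ K : ℕ, 0 < K ∧
      ∃ (w m s : Fin K → EuclideanSpace ℝ (Fin p) → ℝ),
        (∀ k, IsStepFun (w k)) ∧ (∀ k, IsStepFun (m k)) ∧ (∀ k, IsStepFun (s k)) ∧
        (∀ k x, 0 ≤ w k x) ∧ (∀ k x, w k x ≤ 1) ∧ (∀ x, ∑ k, w k x = 1) ∧
        (∀ k x, 0 < s k x) ∧
        ∀ x ∈ X,
          W2 (H x)
              (∑ k, ENNReal.ofReal (w k x) • gaussianReal (m k x) ⟨s k x ^ 2, sq_nonneg _⟩)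
            < ε := by
  classical
  rcases X.eq_empty_or_nonempty with hXe | ⟨x₀, hx₀⟩
  · refine ⟨1, one_pos, fun _ _ => 1, fun _ _ => 0, fun _ _ => 1,
      fun _ => isStepFun_const 1, fun _ => isStepFun_const 0, fun _ => isStepFun_const 1,
      fun _ _ => zero_le_one, fun _ _ => le_rfl, fun _ => by simp, fun _ _ => one_pos, ?_⟩
    intro x hx
    rw [hXe] at hx
    exact absurd hx (Set.notMem_empty x)
  -- notation
  have hε2 : 0 < ε ^ 2 := by positivity
  set C := ∫⁻ z, ENNReal.ofReal (z ^ 2) ∂(gaussianReal 0 1) with hCdef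
  have hCt : C < ⊤ := gaussian_moment_lt_top
  set c0 : ℝ := C.toReal + 1 with hc0def
  have hc1 : (1 : ℝ) ≤ c0 := by
    have := ENNReal.toReal_nonneg (a := C); linarith
  have hc0 : (0 : ℝ) < c0 := by linarith
  set σ : ℝ := ε / (10 * c0) with hσdef
  have hσpos : 0 < σ := by positivity
  set δ : ℝ := ε / (10 * (L + 1)) with hδdef
  have hδpos : 0 < δ := by positivity
  -- finite cover
  obtain ⟨t, ht⟩ := hX.elim_finite_subcover (fun i : X => Metric.ball (i : EuclideanSpace ℝ (Fin p)) δ)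
    (fun i => Metric.isOpen_ball)
    (fun x hx => Set.mem_iUnion.2 ⟨⟨x, hx⟩, Metric.mem_ball_self hδpos⟩)
  have htne : t.Nonempty := by
    have h := ht hx₀
    rw [Set.mem_iUnion₂] at h
    obtain ⟨i, hi, _⟩ := h
    exact ⟨i, hi⟩
  set nC := t.card with hnCdef
  have hnpos : 0 < nC := Finset.card_pos.2 htne
  set c : Fin nC → EuclideanSpace ℝ (Fin p) := fun j => ((t.equivFin.symm j : X) : EuclideanSpace ℝ (Fin p)) with hcdef
  have hcX : ∀ j, c j ∈ X := fun j => (t.equivFin.symm j : X).2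
  set B : Fin nC → Set (EuclideanSpace ℝ (Fin p)) := fun j => Metric.ball (c j) δ with hBdef
  have hcov : ∀ x ∈ X, ∃ j, x ∈ B j := by
    intro x hx
    have h := ht hx
    rw [Set.mem_iUnion₂] at h
    obtain ⟨i, hit, hxi⟩ := h
    refine ⟨t.equivFin ⟨i, hit⟩, ?_⟩
    simpa [hBdef, hcdef, Equiv.symm_apply_apply] using hxi
  set j₀ : Fin nC := ⟨0, hnpos⟩ with hj₀def
  set g : EuclideanSpace ℝ (Fin p) → Fin nC := selIdx B j₀ with hgdef
  have hg : IsStepFun g := selIdx_isStepFun B (fun j => measurableSet_ball) j₀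
  -- discretization level
  have hex : ∃ n : ℕ, ∀ j : Fin nC,
      ∫⁻ v, ENNReal.ofReal ((v - disc n v) ^ 2) ∂(H (c j)) < ENNReal.ofReal (ε ^ 2 / 100) := by
    have hev : ∀ᶠ n : ℕ in atTop, ∀ j : Fin nC,
        ∫⁻ v, ENNReal.ofReal ((v - disc n v) ^ 2) ∂(H (c j)) < ENNReal.ofReal (ε ^ 2 / 100) := by
      rw [eventually_all]
      intro j
      haveI := (hH _ (hcX j)).1
      exact (disc_tendsto (H (c j)) (hH _ (hcX j)).2).eventually_lt_const
        (ENNReal.ofReal_pos.2 (by positivity))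
    exact hev.exists
  obtain ⟨n, hn⟩ := hex
  set f : ℝ → ℝ := disc n with hfdef
  have hfm : Measurable f := disc_measurable n
  set R : Finset ℝ := (disc_range_finite n).toFinset with hRdef
  have hfR : ∀ v, f v ∈ R := fun v => (disc_range_finite n).mem_toFinset.2 ⟨v, rfl⟩
  set K := R.card with hKdef
  have hK : 0 < K := Finset.card_pos.2 ⟨f 0, hfR 0⟩
  set a : Fin K → ℝ := fun k => ((R.equivFin.symm k : R) : ℝ) with hadef
  set vσ : NNReal := ⟨σ ^ 2, sq_nonneg σ⟩ with hvσdef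
  -- partition facts
  have huniv : ⋃ r ∈ R, f ⁻¹' {r} = Set.univ := by
    ext v
    simp only [Set.mem_iUnion, Set.mem_preimage, Set.mem_singleton_iff, Set.mem_univ, iff_true]
    exact ⟨f v, hfR v, rfl⟩
  have hdisj : (R : Set ℝ).PairwiseDisjoint fun r => f ⁻¹' {r} := by
    intro r _ r' _ hne
    apply Set.disjoint_left.2
    intro v hv hv'
    simp only [Set.mem_preimage, Set.mem_singleton_iff] at hv hv'
    exact hne (by rw [← hv, ← hv'])
  have hsum_one : ∀ yM : Measure ℝ, IsProbabilityMeasure yM →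
      ∑ k : Fin K, yM (f ⁻¹' {a k}) = 1 := by
    intro yM hyM
    have h1 : ∑ k : Fin K, yM (f ⁻¹' {a k}) = ∑ i : R, yM (f ⁻¹' {(i : ℝ)}) :=
      Equiv.sum_comp R.equivFin.symm (fun i : R => yM (f ⁻¹' {(i : ℝ)}))
    rw [h1, Finset.sum_coe_sort R (fun r => yM (f ⁻¹' {r})),
      ← measure_biUnion_finset hdisj (fun r _ => hfm (measurableSet_singleton r)), huniv,
      measure_univ]
  -- the answer
  refine ⟨K, hK, fun k x => ((H (c (g x))) (f ⁻¹' {a k})).toReal, fun k _ => a k,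
    fun _ _ => σ, ?_, ?_, ?_, ?_, ?_, ?_, ?_, ?_⟩
  · intro k
    exact hg.comp' (fun j => ((H (c j)) (f ⁻¹' {a k})).toReal)
  · intro k
    exact isStepFun_const _
  · intro k
    exact isStepFun_const _
  · intro k x
    exact ENNReal.toReal_nonneg
  · intro k x
    haveI := (hH _ (hcX (g x))).1
    have h := prob_le_one (μ := H (c (g x))) (s := f ⁻¹' {a k})
    have := ENNReal.toReal_mono ENNReal.one_ne_top h
    simpa using this
  · intro x
    haveI := (hH _ (hcX (g x))).1
    rw [← ENNReal.toReal_sum (fun k _ => measure_ne_top _ _), hsum_one _ inferInstance]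
    simp
  · intro k x
    exact hσpos
  · intro x hx
    set y := c (g x) with hydef
    have hyX : y ∈ X := hcX _
    haveI hHx : IsProbabilityMeasure (H x) := (hH x hx).1
    haveI hHy : IsProbabilityMeasure (H y) := (hH y hyX).1
    have hxy : dist x y < δ := by
      have hmem : x ∈ B (g x) := selIdx_mem (hcov x hx)
      simpa [hBdef, Metric.mem_ball, hydef] using hmem
    -- coupling between H x and H y
    have hW2fin : W2sq (H x) (H y) < ⊤ := W2sq_lt_top (hH x hx) (hH y hyX)
    have hW2le : W2sq (H x) (H y) ≤ ENNReal.ofReal (ε ^ 2 / 100) := by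
      have hnorm : ‖x - y‖ = dist x y := by rw [dist_eq_norm]
      have h1 : W2 (H x) (H y) ≤ ε / 10 := by
        refine le_trans (hLip x hx y hyX) ?_
        rw [hnorm]
        have h2 : L * dist x y ≤ L * δ := by
          apply mul_le_mul_of_nonneg_left hxy.le hL.le
        refine le_trans h2 ?_
        rw [hδdef, mul_div_assoc', div_le_div_iff₀ (by positivity) (by norm_num)]
        nlinarith
      have h3 := W2sq_le_ofReal hW2fin.ne (by positivity) h1
      refine le_trans h3 ?_
      apply ENNReal.ofReal_le_ofReal
      nlinarith
    obtain ⟨γ₀, hγp, hm1, hm2, hcostlt⟩ := exists_coupling_lt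
      (lt_of_le_of_lt hW2le (ENNReal.lt_add_right ENNReal.ofReal_ne_top
        (ne_of_gt (ENNReal.ofReal_pos.2 (by positivity : (0:ℝ) < ε ^ 2 / 100)))))
    haveI := hγp
    have hkey := key_estimate γ₀ hm1 hm2 hfm hfR σ
    -- identify the mixture
    have hMeq : (∑ k : Fin K, ENNReal.ofReal (((H y) (f ⁻¹' {a k})).toReal)
          • gaussianReal (a k) vσ)
        = ∑ r ∈ R, (H y) (f ⁻¹' {r}) • gaussianReal r vσ := by
      have h1 : ∀ k : Fin K, ENNReal.ofReal (((H y) (f ⁻¹' {a k})).toReal)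
          = (H y) (f ⁻¹' {a k}) := fun k => ENNReal.ofReal_toReal (measure_ne_top _ _)
      simp_rw [h1]
      rw [← Finset.sum_coe_sort R (fun r => (H y) (f ⁻¹' {r}) • gaussianReal r vσ)]
      exact Equiv.sum_comp R.equivFin.symm
        (fun i : R => (H y) (f ⁻¹' {(i : ℝ)}) • gaussianReal (i : ℝ) vσ)
    show W2 (H x) (∑ k : Fin K, ENNReal.ofReal (((H y) (f ⁻¹' {a k})).toReal)
      • gaussianReal (a k) vσ) < ε
    apply W2_lt_of_W2sq_lt hε
    have hnum : 2 * σ ^ 2 * c0 ≤ ε ^ 2 / 50 := by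
      have hval : 2 * (ε / (10 * c0)) ^ 2 * c0 = ε ^ 2 / (50 * c0) := by
        field_simp
        ring
      rw [hσdef, hval, div_le_div_iff₀ (by positivity) (by norm_num)]
      nlinarith
    calc W2sq (H x) (∑ k : Fin K, ENNReal.ofReal (((H y) (f ⁻¹' {a k})).toReal)
          • gaussianReal (a k) vσ)
        = W2sq (H x) (∑ r ∈ R, (H y) (f ⁻¹' {r}) • gaussianReal r vσ) := by rw [hMeq]
      _ ≤ 4 * (∫⁻ q, ENNReal.ofReal ((q.1 - q.2) ^ 2) ∂γ₀)
            + 4 * (∫⁻ v, ENNReal.ofReal ((v - f v) ^ 2) ∂(H y))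
            + ENNReal.ofReal (2 * σ ^ 2) * C := hkey
      _ ≤ 4 * (ENNReal.ofReal (ε ^ 2 / 100) + ENNReal.ofReal (ε ^ 2 / 100))
            + 4 * ENNReal.ofReal (ε ^ 2 / 100)
            + ENNReal.ofReal (2 * σ ^ 2) * ENNReal.ofReal c0 := by
          gcongr
          · exact (hn (g x)).le
          · calc C = ENNReal.ofReal C.toReal := (ENNReal.ofReal_toReal hCt.ne).symm
              _ ≤ ENNReal.ofReal c0 := ENNReal.ofReal_le_ofReal (by rw [hc0def]; linarith)
      _ = ENNReal.ofReal (4 * (ε ^ 2 / 100 + ε ^ 2 / 100) + 4 * (ε ^ 2 / 100)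
            + (2 * σ ^ 2) * c0) := by
          rw [← ENNReal.ofReal_add (by positivity) (by positivity),
            show (4 : ℝ≥0∞) = ENNReal.ofReal (4 : ℝ) from (ENNReal.ofReal_ofNat 4).symm,
            ← ENNReal.ofReal_mul (by norm_num), ← ENNReal.ofReal_mul (by norm_num),
            ← ENNReal.ofReal_mul (by positivity),
            ← ENNReal.ofReal_add (by positivity) (by positivity),
            ← ENNReal.ofReal_add (by positivity) (by positivity)]
      _ < ENNReal.ofReal (ε ^ 2) := by
          rw [ENNReal.ofReal_lt_ofReal_iff hε2]
          nlinarith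
end

section
/- (Equality case of the mixture majorization inequality.) Let f, g ∈ P₂(ℝ) have continuous, strictly positive probability density functions, with F the CDF of f (with inverse F^{-1}) and G the CDF of g. Let f = Σ_{k=1}^K π_k f_k be a mixture decomposition with weights π_k ≥ 0 summing to one and continuous component densities f_k. Define, for k = 1,…,K, g_k(x) = g(x) · f_k(F^{-1}(G(x))) / Σ_{l=1}^K π_l f_l(F^{-1}(G(x))) for x ∈ ℝ. Then g = Σ_{k=1}^K π_k g_k is a mixture decomposition of g, and equality holds in the majorization inequality: W₂²(f, g) = Σ_{k=1}^K π_k W₂²(f_k, g_k). -/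
open MeasureTheory ProbabilityTheory ENNReal Filter

/-!
The map `e = F⁻¹ ∘ G` is an increasing bijection of `ℝ` pushing `g` forward to `f`, and it is an
optimal transport map: if `ψ` is a primitive of `e` and `ψ*(x) = x e⁻¹(x) - ψ(e⁻¹(x))` its convex
conjugate, Young's inequality `x y ≤ ψ(y) + ψ*(x)` holds with equality on the graph `x = e(y)`, so
the potentials `x² - 2ψ*(x)` and `y² - 2ψ(y)` bound the cost of every coupling of `f` and `g` from
below by `∫ (e(y) - y)² dg`. The components `g_k` are built so that `e` also pushes `g_k` forward to
`f_k`, whence `Σ π_k W₂²(f_k, g_k) ≤ Σ π_k ∫ (e(y) - y)² dg_k = ∫ (e(y) - y)² dg ≤ W₂²(f, g)`. The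
reverse inequality holds for every mixture: glue near-optimal couplings of the components.
-/

open Set

lemma MeasureTheory.Measure.map_withDensity_comp {α β : Type*} [MeasurableSpace α]
    [MeasurableSpace β] {ν : Measure β} {S : β → α} (hS : Measurable S) {φ : α → ℝ≥0∞}
    (hφ : Measurable φ) :
    (ν.withDensity fun x => φ (S x)).map S = (ν.map S).withDensity φ := by
  ext A hA
  rw [Measure.map_apply hS hA, withDensity_apply _ (hS hA), withDensity_apply _ hA,
    setLIntegral_map hA hφ hS]

lemma ofReal_integral_le_lintegral_ofReal {α : Type*} [MeasurableSpace α] {μ : Measure α}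
    {h : α → ℝ} (hh : Integrable h μ) :
    ENNReal.ofReal (∫ x, h x ∂μ) ≤ ∫⁻ x, ENNReal.ofReal (h x) ∂μ := by
  calc ENNReal.ofReal (∫ x, h x ∂μ) ≤ ENNReal.ofReal (∫ x, max (h x) 0 ∂μ) :=
        ENNReal.ofReal_le_ofReal (integral_mono hh hh.pos_part fun x => le_max_left _ _)
    _ = ∫⁻ x, ENNReal.ofReal (h x) ∂μ := by
        rw [ofReal_integral_eq_lintegral_ofReal hh.pos_part (.of_forall fun x => le_max_right _ _)]
        simp

noncomputable def ofDensity (d : ℝ → ℝ) : Measure ℝ :=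
  volume.withDensity fun x => ENNReal.ofReal (d x)

lemma sum_smul_ofDensity {ι : Type*} [Fintype ι] (w : ι → ℝ) (hw : ∀ k, 0 ≤ w k)
    (d : ι → ℝ → ℝ) (hd : ∀ k, Measurable (d k)) (hd0 : ∀ k x, 0 ≤ d k x) :
    ∑ k, ENNReal.ofReal (w k) • ofDensity (d k) = ofDensity fun x => ∑ k, w k * d k x := by
  ext A hA
  have hsum (x : ℝ) : ENNReal.ofReal (∑ k, w k * d k x) =
      ∑ k, ENNReal.ofReal (w k) * ENNReal.ofReal (d k x) := by
    simp only [ENNReal.ofReal_sum_of_nonneg fun k _ => mul_nonneg (hw k) (hd0 k x),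
      ENNReal.ofReal_mul (hw _)]
  simp only [ofDensity, Measure.coe_finsetSum, Finset.sum_apply, Measure.smul_apply,
    withDensity_apply _ hA, smul_eq_mul, hsum]
  rw [lintegral_finsetSum _ fun k _ => ((hd k).ennreal_ofReal).const_mul _]
  simp only [lintegral_const_mul _ (hd _).ennreal_ofReal]

lemma ofDensity_mul {d h : ℝ → ℝ} (hd : Measurable d) (hh : Measurable h) (hd0 : ∀ x, 0 ≤ d x) :
    ofDensity (fun x => d x * h x) = (ofDensity d).withDensity fun x => ENNReal.ofReal (h x) := by
  simp only [ofDensity, ENNReal.ofReal_mul (hd0 _)]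
  exact withDensity_mul volume hd.ennreal_ofReal hh.ennreal_ofReal

lemma map_ofDensity_mul_div_comp {d₁ d₂ d : ℝ → ℝ} {S : ℝ → ℝ} (hS : Measurable S)
    (hmap : (ofDensity d₂).map S = ofDensity d₁) (hd₁ : Measurable d₁) (hd₂ : Measurable d₂)
    (hd : Measurable d) (hd₁0 : ∀ x, 0 < d₁ x) (hd₂0 : ∀ x, 0 ≤ d₂ x) :
    (ofDensity fun x => d₂ x * (d (S x) / d₁ (S x))).map S = ofDensity d := by
  have hratio : Measurable fun x => d x / d₁ x := hd.div hd₁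
  rw [ofDensity_mul (h := fun x => d (S x) / d₁ (S x)) hd₂ (hratio.comp hS) hd₂0,
    Measure.map_withDensity_comp (φ := fun x => ENNReal.ofReal (d x / d₁ x)) hS
      hratio.ennreal_ofReal, hmap, ← ofDensity_mul hd₁ hratio fun x => (hd₁0 x).le]
  congr 1 with x
  exact mul_div_cancel₀ _ (hd₁0 x).ne'

lemma sum_smul_ofDensity_mul_div_comp {ι : Type*} [Fintype ι] (w : ι → ℝ) (hw : ∀ k, 0 ≤ w k)
    {d : ι → ℝ → ℝ} (hd : ∀ k, Measurable (d k)) (hd0 : ∀ k x, 0 ≤ d k x) {d₁ d₂ : ℝ → ℝ}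
    (hd₁ : ∀ x, d₁ x = ∑ k, w k * d k x) (hd₁0 : ∀ x, 0 < d₁ x) (hd₂ : Measurable d₂)
    (hd₂0 : ∀ x, 0 ≤ d₂ x) {S : ℝ → ℝ} (hS : Measurable S) :
    ∑ k, ENNReal.ofReal (w k) • ofDensity (fun x => d₂ x * (d k (S x) / d₁ (S x))) =
      ofDensity d₂ := by
  have hd₁m : Measurable d₁ := by
    rw [funext hd₁]
    exact Finset.measurable_fun_sum _ fun k _ => (hd k).const_mul _
  rw [sum_smul_ofDensity w hw _ (fun k => by fun_prop) fun k x =>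
    mul_nonneg (hd₂0 x) (div_nonneg (hd0 k _) (hd₁0 _).le)]
  congr 1 with x
  calc ∑ k, w k * (d₂ x * (d k (S x) / d₁ (S x)))
      = d₂ x * (∑ k, w k * d k (S x)) / d₁ (S x) := by
        rw [Finset.mul_sum, Finset.sum_div]
        congr 1 with k
        ring
    _ = d₂ x := by rw [← hd₁, mul_div_cancel_right₀ _ (hd₁0 _).ne']

section Density

variable {d : ℝ → ℝ}

lemma ofDensity_eq_ofDensity_iff {d' : ℝ → ℝ} (hd : Continuous d) (hd' : Continuous d')
    (hd0 : ∀ x, 0 ≤ d x) (hd0' : ∀ x, 0 ≤ d' x) : ofDensity d = ofDensity d' ↔ d = d' := by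
  refine ⟨fun h => ?_, fun h => h ▸ rfl⟩
  have hofReal : (fun x => ENNReal.ofReal (d x)) = fun x => ENNReal.ofReal (d' x) :=
    (ENNReal.continuous_ofReal.comp hd).ae_eq_iff_eq volume
      (ENNReal.continuous_ofReal.comp hd') |>.mp <|
      (withDensity_eq_iff_of_sigmaFinite (by fun_prop) (by fun_prop)).mp h
  funext x
  exact (ENNReal.ofReal_eq_ofReal_iff (hd0 x) (hd0' x)).mp (congrFun hofReal x)

lemma ofDensity_Ioc (hd : Continuous d) (hd0 : ∀ x, 0 ≤ d x) {a b : ℝ} (hab : a ≤ b) :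
    ofDensity d (Ioc a b) = ENNReal.ofReal (∫ t in a..b, d t) := by
  rw [ofDensity, withDensity_apply _ measurableSet_Ioc, intervalIntegral.integral_of_le hab,
    ofReal_integral_eq_lintegral_ofReal hd.integrableOn_Ioc (.of_forall hd0)]

variable [IsProbabilityMeasure (ofDensity d)]

lemma cdf_ofDensity_sub_cdf (hd : Continuous d) (hd0 : ∀ x, 0 ≤ d x) (a b : ℝ) :
    cdf (ofDensity d) b - cdf (ofDensity d) a = ∫ t in a..b, d t := by
  wlog hab : a ≤ b generalizing a b
  · rw [intervalIntegral.integral_symm, ← this b a (le_of_not_ge hab)]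
    ring
  rw [cdf_eq_real, cdf_eq_real, ← Iic_union_Ioc_eq_Iic hab,
    measureReal_union (Iic_disjoint_Ioc le_rfl) measurableSet_Ioc, add_sub_cancel_left,
    measureReal_def, ofDensity_Ioc hd hd0 hab,
    ENNReal.toReal_ofReal (intervalIntegral.integral_nonneg hab fun t _ => hd0 t)]

lemma continuous_cdf_ofDensity (hd : Continuous d) (hd0 : ∀ x, 0 ≤ d x) :
    Continuous (cdf (ofDensity d)) := by
  have hprim : (cdf (ofDensity d) : ℝ → ℝ) =
      fun x => cdf (ofDensity d) 0 + ∫ t in (0 : ℝ)..x, d t := by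
    funext x
    rw [← cdf_ofDensity_sub_cdf hd hd0]
    ring
  rw [hprim]
  exact continuous_const.add (intervalIntegral.continuous_primitive (hd.intervalIntegrable · ·) 0)

lemma strictMono_cdf_ofDensity (hd : Continuous d) (hd0 : ∀ x, 0 < d x) :
    StrictMono (cdf (ofDensity d)) := fun a b hab => by
  have := cdf_ofDensity_sub_cdf hd (fun x => (hd0 x).le) a b
  have := intervalIntegral.intervalIntegral_pos_of_pos (hd.intervalIntegrable a b) hd0 hab
  linarith

end Density

lemma cdf_mem_Ioo_of_strictMono (μ : Measure ℝ) (hμ : StrictMono (cdf μ)) (x : ℝ) :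
    cdf μ x ∈ Ioo 0 1 :=
  ⟨(cdf_nonneg μ (x - 1)).trans_lt (hμ (by linarith)),
    (hμ (lt_add_one x)).trans_le (cdf_le_one μ (x + 1))⟩

lemma Ioo_subset_range_cdf (μ : Measure ℝ) (hμ : Continuous (cdf μ)) :
    Ioo 0 1 ⊆ range (cdf μ) := fun _ hs =>
  mem_range_of_exists_le_of_exists_ge hμ
    ((tendsto_cdf_atBot μ).eventually (eventually_le_nhds hs.1)).exists
    ((tendsto_cdf_atTop μ).eventually (eventually_ge_nhds hs.2)).exists

lemma exists_orderIso_map_eq_of_cdf {μ ν : Measure ℝ} [IsProbabilityMeasure μ]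
    [IsProbabilityMeasure ν] (hν : Continuous (cdf ν)) (hν' : StrictMono (cdf ν))
    (Q : ℝ → ℝ) (hQ : ∀ x, Q (cdf μ x) = x) (hQ' : ∀ s ∈ Ioo (0 : ℝ) 1, cdf μ (Q s) = s) :
    ∃ e : ℝ ≃o ℝ, ⇑e = (fun y => Q (cdf ν y)) ∧ ν.map e = μ := by
  have hμ : StrictMono (cdf μ) :=
    (monotone_cdf μ).strictMono_of_injective (Function.LeftInverse.injective hQ)
  have hcdf (y : ℝ) : cdf μ (Q (cdf ν y)) = cdf ν y := hQ' _ (cdf_mem_Ioo_of_strictMono ν hν' y)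
  have hmono : StrictMono fun y => Q (cdf ν y) := fun a b hab => by
    by_contra! h
    have := monotone_cdf μ h
    rw [hcdf, hcdf] at this
    exact (hν' hab).not_ge this
  have hsurj : Function.Surjective fun y => Q (cdf ν y) := fun x => by
    obtain ⟨y, hy⟩ := Ioo_subset_range_cdf ν hν (cdf_mem_Ioo_of_strictMono μ hμ x)
    exact ⟨y, by simp only [hy, hQ]⟩
  set e := StrictMono.orderIsoOfSurjective _ hmono hsurj
  refine ⟨e, rfl, ?_⟩
  have he : Measurable e := e.monotone.measurable
  have := Measure.isProbabilityMeasure_map (μ := ν) he.aemeasurable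
  refine Measure.ext_of_Iic _ _ fun a => ?_
  rw [Measure.map_apply he measurableSet_Iic, e.preimage_Iic, ← ofReal_cdf, ← ofReal_cdf, ← hcdf]
  exact congrArg (ENNReal.ofReal ∘ cdf μ) (e.apply_symm_apply a)

lemma W2sq_le_lintegral {μ ν : Measure ℝ} (γ : Measure (ℝ × ℝ)) [IsProbabilityMeasure γ]
    (h₁ : γ.map Prod.fst = μ) (h₂ : γ.map Prod.snd = ν) :
    W2sq μ ν ≤ ∫⁻ p, ENNReal.ofReal ((p.1 - p.2) ^ 2) ∂γ :=
  iInf₂_le_of_le γ ‹_› <| iInf₂_le_of_le h₁ h₂ le_rfl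

lemma le_W2sq {μ ν : Measure ℝ} {c : ℝ≥0∞}
    (h : ∀ γ : Measure (ℝ × ℝ), IsProbabilityMeasure γ → γ.map Prod.fst = μ →
      γ.map Prod.snd = ν → c ≤ ∫⁻ p, ENNReal.ofReal ((p.1 - p.2) ^ 2) ∂γ) :
    c ≤ W2sq μ ν :=
  le_iInf₂ fun γ hγ => le_iInf₂ fun h₁ h₂ => h γ hγ h₁ h₂

lemma W2sq_map_le (ν : Measure ℝ) [IsProbabilityMeasure ν] {S : ℝ → ℝ} (hS : Measurable S) :
    W2sq (ν.map S) ν ≤ ∫⁻ y, ENNReal.ofReal ((S y - y) ^ 2) ∂ν := by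
  have hSid : Measurable fun y => (S y, y) := hS.prodMk measurable_id
  have := Measure.isProbabilityMeasure_map (μ := ν) hSid.aemeasurable
  convert W2sq_le_lintegral (ν.map fun y => (S y, y)) ?_ ?_ using 1
  · rw [lintegral_map (by fun_prop) hSid]
  · rw [Measure.map_map measurable_fst hSid]; rfl
  · rw [Measure.map_map measurable_snd hSid]; exact Measure.map_id

lemma exists_coupling_lintegral_le_W2sq_add (μ ν : Measure ℝ) [IsProbabilityMeasure μ]
    [IsProbabilityMeasure ν] {ε : ℝ≥0∞} (hε : ε ≠ 0) :
    ∃ γ : Measure (ℝ × ℝ), IsProbabilityMeasure γ ∧ γ.map Prod.fst = μ ∧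
      γ.map Prod.snd = ν ∧ ∫⁻ p, ENNReal.ofReal ((p.1 - p.2) ^ 2) ∂γ ≤ W2sq μ ν + ε := by
  by_cases h : W2sq μ ν = ⊤
  · exact ⟨μ.prod ν, inferInstance, by simp, by simp, by simp [h]⟩
  · obtain ⟨γ, hγ, h₁, h₂, hlt⟩ : ∃ γ : Measure (ℝ × ℝ), ∃ _ : IsProbabilityMeasure γ,
        ∃ _ : γ.map Prod.fst = μ, ∃ _ : γ.map Prod.snd = ν,
          ∫⁻ p, ENNReal.ofReal ((p.1 - p.2) ^ 2) ∂γ < W2sq μ ν + ε := by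
      simpa only [W2sq, iInf_lt_iff] using ENNReal.lt_add_right h hε
    exact ⟨γ, hγ, h₁, h₂, hlt.le⟩

lemma W2sq_sum_smul_le {ι : Type*} [Fintype ι] (w : ι → ℝ) (hw : ∀ k, 0 ≤ w k)
    (hsum : ∑ k, w k = 1) (μ ν : ι → Measure ℝ) [∀ k, IsProbabilityMeasure (μ k)]
    [∀ k, IsProbabilityMeasure (ν k)] :
    W2sq (∑ k, ENNReal.ofReal (w k) • μ k) (∑ k, ENNReal.ofReal (w k) • ν k)
      ≤ ∑ k, ENNReal.ofReal (w k) * W2sq (μ k) (ν k) := by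
  have hwsum : ∑ k, ENNReal.ofReal (w k) = 1 := by
    rw [← ENNReal.ofReal_sum_of_nonneg fun k _ => hw k, hsum, ENNReal.ofReal_one]
  refine ENNReal.le_of_forall_pos_le_add fun ε hε _ => ?_
  choose γ hγ h₁ h₂ hγε using fun k =>
    exists_coupling_lintegral_le_W2sq_add (μ k) (ν k) (ε := ε) (by simpa using hε.ne')
  set Γ := ∑ k, ENNReal.ofReal (w k) • γ k
  have : IsProbabilityMeasure Γ :=
    ⟨by simp [Γ, Measure.coe_finsetSum, measure_univ, hwsum]⟩
  calc W2sq (∑ k, ENNReal.ofReal (w k) • μ k) (∑ k, ENNReal.ofReal (w k) • ν k)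
      ≤ ∫⁻ p, ENNReal.ofReal ((p.1 - p.2) ^ 2) ∂Γ :=
        W2sq_le_lintegral Γ
          (by simp only [Γ, Measure.map_finset_sum' measurable_fst.aemeasurable,
            Measure.map_smul, h₁])
          (by simp only [Γ, Measure.map_finset_sum' measurable_snd.aemeasurable,
            Measure.map_smul, h₂])
    _ = ∑ k, ENNReal.ofReal (w k) * ∫⁻ p, ENNReal.ofReal ((p.1 - p.2) ^ 2) ∂γ k := by
        simp [Γ, lintegral_finsetSum_measure]
    _ ≤ ∑ k, ENNReal.ofReal (w k) * (W2sq (μ k) (ν k) + ε) := by gcongr with k; exact hγε k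
    _ = ∑ k, ENNReal.ofReal (w k) * W2sq (μ k) (ν k) + ε := by
        simp only [mul_add, Finset.sum_add_distrib, ← Finset.sum_mul, hwsum, one_mul]

lemma MemP2.memLp_two {μ : Measure ℝ} (hμ : MemP2 μ) : MemLp id 2 μ :=
  (memLp_two_iff_integrable_sq aestronglyMeasurable_id).mpr
    ⟨by fun_prop, (hasFiniteIntegral_iff_ofReal (.of_forall fun x => sq_nonneg x)).mpr hμ.2⟩

lemma lintegral_map_le_of_potentials {α β : Type*} [MeasurableSpace α] [MeasurableSpace β]
    {μ : Measure α} {ν : Measure β} {S : β → α} (hS : Measurable S) (hmap : ν.map S = μ)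
    {c : α → β → ℝ} (hc0 : ∀ x y, 0 ≤ c x y) {χ : α → ℝ} {ρ : β → ℝ}
    (hχ : Integrable χ μ) (hρ : Integrable ρ ν) (hc : ∀ x y, χ x + ρ y ≤ c x y)
    (hcS : ∀ y, c (S y) y = χ (S y) + ρ y) {γ : Measure (α × β)}
    (h₁ : γ.map Prod.fst = μ) (h₂ : γ.map Prod.snd = ν) :
    ∫⁻ y, ENNReal.ofReal (c (S y) y) ∂ν ≤ ∫⁻ p, ENNReal.ofReal (c p.1 p.2) ∂γ := by
  subst hmap
  have hχS : Integrable (fun y => χ (S y)) ν :=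
    (integrable_map_measure hχ.1 hS.aemeasurable).mp hχ
  have hχ₁ : Integrable (fun p => χ p.1) γ :=
    (integrable_map_measure (h₁ ▸ hχ.1) measurable_fst.aemeasurable).mp (h₁ ▸ hχ)
  have hρ₂ : Integrable (fun p => ρ p.2) γ :=
    (integrable_map_measure (h₂ ▸ hρ.1) measurable_snd.aemeasurable).mp (h₂ ▸ hρ)
  calc ∫⁻ y, ENNReal.ofReal (c (S y) y) ∂ν = ENNReal.ofReal (∫ y, χ (S y) + ρ y ∂ν) := by
        simp only [hcS]
        exact (ofReal_integral_eq_lintegral_ofReal (hχS.add hρ)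
          (.of_forall fun y => show 0 ≤ χ (S y) + ρ y from hcS y ▸ hc0 _ _)).symm
    _ = ENNReal.ofReal (∫ p, χ p.1 + ρ p.2 ∂γ) := by
        rw [integral_add hχS hρ, integral_add hχ₁ hρ₂, ← integral_map hS.aemeasurable hχ.1,
          ← h₁, integral_map measurable_fst.aemeasurable (h₁ ▸ hχ.1), ← h₂,
          integral_map measurable_snd.aemeasurable (h₂ ▸ hρ.1)]
    _ ≤ ∫⁻ p, ENNReal.ofReal (χ p.1 + ρ p.2) ∂γ := ofReal_integral_le_lintegral_ofReal (hχ₁.add hρ₂)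
    _ ≤ ∫⁻ p, ENNReal.ofReal (c p.1 p.2) ∂γ :=
        lintegral_mono fun p => ENNReal.ofReal_le_ofReal (hc _ _)

lemma mul_sub_le_intervalIntegral_of_monotone {S : ℝ → ℝ} (hS : Monotone S) (t y : ℝ) :
    S t * (y - t) ≤ ∫ u in t..y, S u := by
  rcases le_total t y with h | h
  · calc S t * (y - t) = ∫ _ in t..y, S t := by simp [mul_comm]
      _ ≤ ∫ u in t..y, S u := intervalIntegral.integral_mono_on h intervalIntegrable_const
          (hS.intervalIntegrable) fun u hu => hS hu.1
  · calc S t * (y - t)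
        = -∫ _ in y..t, S t := by
          simp only [intervalIntegral.integral_const, smul_eq_mul]
          ring
      _ ≤ -∫ u in y..t, S u := neg_le_neg <| intervalIntegral.integral_mono_on h
          hS.intervalIntegrable intervalIntegrable_const fun u hu => hS hu.2
      _ = ∫ u in t..y, S u := intervalIntegral.integral_symm _ _ |>.symm

lemma mul_le_primitive_add_conjugate {S : ℝ → ℝ} (hS : Monotone S) (t y : ℝ) :
    S t * y ≤ (∫ u in (0 : ℝ)..y, S u) + (S t * t - ∫ u in (0 : ℝ)..t, S u) := by
  have := mul_sub_le_intervalIntegral_of_monotone hS t y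
  rw [← intervalIntegral.integral_interval_sub_left (a := 0) hS.intervalIntegrable
    hS.intervalIntegrable] at this
  linarith

theorem lintegral_sq_sub_le_W2sq {μ ν : Measure ℝ} (hμ : MemP2 μ) (hν : MemP2 ν) (e : ℝ ≃o ℝ)
    (hmap : ν.map e = μ) : ∫⁻ y, ENNReal.ofReal ((e y - y) ^ 2) ∂ν ≤ W2sq μ ν := by
  have := hν.1
  have he_meas : Measurable e := e.monotone.measurable
  set ψ : ℝ → ℝ := fun y => ∫ u in (0 : ℝ)..y, e u
  have hψ_cont : Continuous ψ :=
    intervalIntegral.continuous_primitive (fun _ _ => e.monotone.intervalIntegrable) 0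
  have hid : MemLp id 2 ν := hν.memLp_two
  have he : MemLp e 2 ν := by
    simpa using (memLp_map_measure_iff aestronglyMeasurable_id he_meas.aemeasurable).mp
      (hmap ▸ hμ.memLp_two)
  have hψ : Integrable ψ ν := by
    refine Integrable.mono' ((((hid.integrable one_le_two).mul_const (e 0)).abs).add
      (hid.integrable_mul he).abs) hψ_cont.aestronglyMeasurable (.of_forall fun y => ?_)
    have h₀ := mul_sub_le_intervalIntegral_of_monotone e.monotone 0 y
    have h₁ := mul_sub_le_intervalIntegral_of_monotone e.monotone y 0
    rw [intervalIntegral.integral_symm] at h₁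
    simp only [Real.norm_eq_abs, id, Pi.add_apply, Pi.mul_apply, sub_zero, zero_sub] at h₀ h₁ ⊢
    exact (abs_le_max_abs_abs (by linarith) (by linarith)).trans
      (max_le_add_of_nonneg (abs_nonneg _) (abs_nonneg _))
  refine le_W2sq fun γ _ h₁ h₂ => lintegral_map_le_of_potentials he_meas hmap
    (c := fun x y => (x - y) ^ 2) (fun _ _ => sq_nonneg _)
    (χ := fun x => x ^ 2 - 2 * (x * e.symm x - ψ (e.symm x))) (ρ := fun y => y ^ 2 - 2 * ψ y)
    ?_ (hid.integrable_sq.sub (hψ.const_mul 2)) (fun x y => ?_) (fun y => ?_) h₁ h₂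
  · have hχ_meas : Measurable fun x => x ^ 2 - 2 * (x * e.symm x - ψ (e.symm x)) := by
      have := e.symm.monotone.measurable
      fun_prop
    rw [← hmap, integrable_map_measure hχ_meas.aestronglyMeasurable he_meas.aemeasurable]
    simp only [Function.comp_def, e.symm_apply_apply]
    exact he.integrable_sq.sub (((he.integrable_mul hid).sub hψ).const_mul 2)
  · have := mul_le_primitive_add_conjugate e.monotone (e.symm x) y
    rw [e.apply_symm_apply] at this
    linarith [show (x - y) ^ 2 = x ^ 2 - 2 * (x * y) + y ^ 2 by ring]
  · simp only [e.symm_apply_apply]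
    ring

theorem W2sq_sum_smul_eq_of_map_orderIso {ι : Type*} [Fintype ι] (w : ι → ℝ) (hw : ∀ k, 0 ≤ w k)
    (hsum : ∑ k, w k = 1) (μ ν : ι → Measure ℝ) [∀ k, IsProbabilityMeasure (μ k)]
    [∀ k, IsProbabilityMeasure (ν k)] (hμ : MemP2 (∑ k, ENNReal.ofReal (w k) • μ k))
    (hν : MemP2 (∑ k, ENNReal.ofReal (w k) • ν k)) (e : ℝ ≃o ℝ) (hmap : ∀ k, (ν k).map e = μ k) :
    W2sq (∑ k, ENNReal.ofReal (w k) • μ k) (∑ k, ENNReal.ofReal (w k) • ν k)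
      = ∑ k, ENNReal.ofReal (w k) * W2sq (μ k) (ν k) := by
  have he : Measurable e := e.monotone.measurable
  refine le_antisymm (W2sq_sum_smul_le w hw hsum μ ν) ?_
  calc ∑ k, ENNReal.ofReal (w k) * W2sq (μ k) (ν k)
      ≤ ∑ k, ENNReal.ofReal (w k) * ∫⁻ y, ENNReal.ofReal ((e y - y) ^ 2) ∂ν k := by
        gcongr with k
        exact hmap k ▸ W2sq_map_le _ he
    _ = ∫⁻ y, ENNReal.ofReal ((e y - y) ^ 2) ∂∑ k, ENNReal.ofReal (w k) • ν k := by
        simp only [lintegral_finsetSum_measure, lintegral_smul_measure, smul_eq_mul]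
    _ ≤ _ := lintegral_sq_sub_le_W2sq hμ hν e <| by
        simp only [Measure.map_finset_sum' he.aemeasurable, Measure.map_smul, hmap]

theorem mixture_majorization_equality_general
    (K : ℕ) (w : Fin K → ℝ) (hw : ∀ k, 0 ≤ w k) (hsum : ∑ k, w k = 1)
    (f g : Measure ℝ) (hf : MemP2 f) (hg : MemP2 g)
    (df dg : ℝ → ℝ) (hdfc : Continuous df) (hdgc : Continuous dg)
    (hdfpos : ∀ x, 0 < df x) (hdgpos : ∀ x, 0 < dg x)
    (hfd : f = MeasureTheory.volume.withDensity (fun x => ENNReal.ofReal (df x)))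
    (hgd : g = MeasureTheory.volume.withDensity (fun x => ENNReal.ofReal (dg x)))
    -- F⁻¹ : the inverse of the CDF F of f
    (Finv : ℝ → ℝ)
    (hFinv : ∀ x : ℝ, Finv (ProbabilityTheory.cdf f x) = x)
    (hFinv' : ∀ s ∈ Set.Ioo (0 : ℝ) 1, ProbabilityTheory.cdf f (Finv s) = s)
    -- the mixture decomposition f = Σ π_k f_k with continuous component densities
    (dfk : Fin K → ℝ → ℝ) (hdfkc : ∀ k, Continuous (dfk k)) (hdfknn : ∀ k x, 0 ≤ dfk k x)
    (hfkprob : ∀ k, IsProbabilityMeasure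
      (MeasureTheory.volume.withDensity fun x => ENNReal.ofReal (dfk k x)))
    (hfdec : f = ∑ k, ENNReal.ofReal (w k) •
      MeasureTheory.volume.withDensity fun x => ENNReal.ofReal (dfk k x)) :
    -- define g_k by the stated formula
    (fun (gk : Fin K → ℝ → ℝ) =>
      (∀ k, IsProbabilityMeasure
          (MeasureTheory.volume.withDensity fun x => ENNReal.ofReal (gk k x))) ∧
      g = (∑ k, ENNReal.ofReal (w k) •
          MeasureTheory.volume.withDensity fun x => ENNReal.ofReal (gk k x)) ∧
      W2sq f g = ∑ k, ENNReal.ofReal (w k) *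
        W2sq (MeasureTheory.volume.withDensity fun x => ENNReal.ofReal (dfk k x))
          (MeasureTheory.volume.withDensity fun x => ENNReal.ofReal (gk k x)))
      (fun k x => dg x * dfk k (Finv (ProbabilityTheory.cdf g x)) /
        ∑ l, w l * dfk l (Finv (ProbabilityTheory.cdf g x))) := by
  change f = ofDensity df at hfd
  change g = ofDensity dg at hgd
  change f = ∑ k, ENNReal.ofReal (w k) • ofDensity (dfk k) at hfdec
  change ∀ k, IsProbabilityMeasure (ofDensity (dfk k)) at hfkprob
  have := hf.1
  have := hg.1
  have : IsProbabilityMeasure (ofDensity dg) := hgd ▸ hg.1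
  obtain ⟨e, he, hmap⟩ := exists_orderIso_map_eq_of_cdf (μ := f) (ν := g)
    (hgd ▸ continuous_cdf_ofDensity hdgc fun x => (hdgpos x).le)
    (hgd ▸ strictMono_cdf_ofDensity hdgc hdgpos) Finv hFinv hFinv'
  have hdf : df = fun x => ∑ k, w k * dfk k x :=
    (ofDensity_eq_ofDensity_iff hdfc (by fun_prop) (fun x => (hdfpos x).le)
      fun x => Finset.sum_nonneg fun k _ => mul_nonneg (hw k) (hdfknn k x)).mp <|
      hfd.symm.trans <| hfdec.trans <|
        sum_smul_ofDensity w hw dfk (fun k => (hdfkc k).measurable) hdfknn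
  have he_meas : Measurable e := e.monotone.measurable
  have hmapk (k : Fin K) :
      (ofDensity fun x => dg x * (dfk k (e x) / df (e x))).map e = ofDensity (dfk k) :=
    map_ofDensity_mul_div_comp he_meas (hgd ▸ hfd ▸ hmap) hdfc.measurable hdgc.measurable
      (hdfkc k).measurable hdfpos fun x => (hdgpos x).le
  have hgk_prob (k : Fin K) :
      IsProbabilityMeasure (ofDensity fun x => dg x * (dfk k (e x) / df (e x))) :=
    (Measure.isProbabilityMeasure_map_iff he_meas.aemeasurable).mp (hmapk k ▸ hfkprob k)
  have hgdec := sum_smul_ofDensity_mul_div_comp w hw (fun k => (hdfkc k).measurable) hdfknn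
    (congrFun hdf) hdfpos hdgc.measurable (fun x => (hdgpos x).le) he_meas
  simp only [← congrFun he, ← congrFun hdf, mul_div_assoc]
  refine ⟨hgk_prob, hgd.trans hgdec.symm, ?_⟩
  rw [hfdec] at hf ⊢
  rw [hgd, ← hgdec] at hg ⊢
  exact W2sq_sum_smul_eq_of_map_orderIso w hw hsum _ _ hf hg e hmapk

/-- Equality case of the mixture majorization inequality: for f, g with continuous
strictly positive densities and a mixture decomposition f = Σ π_k f_k, the components
g_k(x) = g(x) · f_k(F⁻¹(G(x))) / Σ_l π_l f_l(F⁻¹(G(x))) give a mixture decomposition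
g = Σ π_k g_k with W₂²(f, g) = Σ_k π_k W₂²(f_k, g_k). -/
theorem mixture_majorization_equality
    (K : ℕ) (hK : 0 < K) (w : Fin K → ℝ) (hw : ∀ k, 0 ≤ w k) (hsum : ∑ k, w k = 1)
    (f g : Measure ℝ) (hf : MemP2 f) (hg : MemP2 g)
    (df dg : ℝ → ℝ) (hdfc : Continuous df) (hdgc : Continuous dg)
    (hdfpos : ∀ x, 0 < df x) (hdgpos : ∀ x, 0 < dg x)
    (hfd : f = MeasureTheory.volume.withDensity (fun x => ENNReal.ofReal (df x)))
    (hgd : g = MeasureTheory.volume.withDensity (fun x => ENNReal.ofReal (dg x)))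
    -- F⁻¹ : the inverse of the CDF F of f
    (Finv : ℝ → ℝ)
    (hFinv : ∀ x : ℝ, Finv (ProbabilityTheory.cdf f x) = x)
    (hFinv' : ∀ s ∈ Set.Ioo (0 : ℝ) 1, ProbabilityTheory.cdf f (Finv s) = s)
    -- the mixture decomposition f = Σ π_k f_k with continuous component densities
    (dfk : Fin K → ℝ → ℝ) (hdfkc : ∀ k, Continuous (dfk k)) (hdfknn : ∀ k x, 0 ≤ dfk k x)
    (hfkprob : ∀ k, IsProbabilityMeasure
      (MeasureTheory.volume.withDensity fun x => ENNReal.ofReal (dfk k x)))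
    (hfdec : f = ∑ k, ENNReal.ofReal (w k) •
      MeasureTheory.volume.withDensity fun x => ENNReal.ofReal (dfk k x)) :
    -- define g_k by the stated formula
    (fun (gk : Fin K → ℝ → ℝ) =>
      (∀ k, IsProbabilityMeasure
          (MeasureTheory.volume.withDensity fun x => ENNReal.ofReal (gk k x))) ∧
      g = (∑ k, ENNReal.ofReal (w k) •
          MeasureTheory.volume.withDensity fun x => ENNReal.ofReal (gk k x)) ∧
      W2sq f g = ∑ k, ENNReal.ofReal (w k) *
        W2sq (MeasureTheory.volume.withDensity fun x => ENNReal.ofReal (dfk k x))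
          (MeasureTheory.volume.withDensity fun x => ENNReal.ofReal (gk k x)))
      (fun k x => dg x * dfk k (Finv (ProbabilityTheory.cdf g x)) /
        ∑ l, w l * dfk l (Finv (ProbabilityTheory.cdf g x))) :=
  mixture_majorization_equality_general K w hw hsum f g hf hg df dg hdfc hdgc hdfpos hdgpos hfd hgd
    Finv hFinv hFinv' dfk hdfkc hdfknn hfkprob hfdec
end

section
/- (Variational characterization of the Wasserstein distance via mixture decompositions.) Let f, g ∈ P₂(ℝ) have continuous, strictly positive probability density functions, and let f = Σ_{k=1}^K π_k f_k be a fixed mixture decomposition with weights π_k ≥ 0 summing to one and continuous component densities f_k. Then W₂²(f, g) = min { Σ_{k=1}^K π_k W₂²(f_k, g_k) : g = Σ_{k=1}^K π_k g_k is a mixture decomposition of g with the same weights }, and the minimum is attained at g_k(x) = g(x) · f_k(F^{-1}(G(x))) / Σ_{l=1}^K π_l f_l(F^{-1}(G(x))), where F is the CDF of f and G is the CDF of g. -/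
open MeasureTheory ProbabilityTheory ENNReal Filter

section Auxiliary

open Set

lemma W2sq_le' {μ ν : Measure ℝ} {γ : Measure (ℝ × ℝ)} (h1 : IsProbabilityMeasure γ)
    (h2 : γ.map Prod.fst = μ) (h3 : γ.map Prod.snd = ν) :
    W2sq μ ν ≤ ∫⁻ p, ENNReal.ofReal ((p.1 - p.2) ^ 2) ∂γ := by
  refine iInf_le_of_le γ ?_
  rw [iInf_pos h1, iInf_pos h2, iInf_pos h3]

lemma exists_coupling_of_lt' {μ ν : Measure ℝ} {t : ℝ≥0∞} (h : W2sq μ ν < t) :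
    ∃ γ : Measure (ℝ × ℝ), IsProbabilityMeasure γ ∧ γ.map Prod.fst = μ ∧ γ.map Prod.snd = ν ∧
      ∫⁻ p, ENNReal.ofReal ((p.1 - p.2) ^ 2) ∂γ < t := by
  simp only [W2sq, iInf_lt_iff] at h
  obtain ⟨γ, h1, h2, h3, h4⟩ := h
  exact ⟨γ, h1, h2, h3, h4⟩

lemma map_finset_sum' {α β ι : Type*} [MeasurableSpace α] [MeasurableSpace β]
    (s : Finset ι) (c : ι → ℝ≥0∞) (μ : ι → Measure α) {T : α → β} (hT : Measurable T) :
    (∑ i ∈ s, c i • μ i).map T = ∑ i ∈ s, c i • (μ i).map T := by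
  ext t ht
  rw [Measure.map_apply hT ht]
  simp [Measure.finset_sum_apply, Measure.map_apply hT ht]

lemma W2sq_mixture_le (K : ℕ) (w : Fin K → ℝ) (hw : ∀ k, 0 ≤ w k) (hsum : ∑ k, w k = 1)
    (f g : Measure ℝ) (fk gk : Fin K → Measure ℝ)
    (hfk : ∀ k, IsProbabilityMeasure (fk k)) (hgk : ∀ k, IsProbabilityMeasure (gk k))
    (hf : f = ∑ k, ENNReal.ofReal (w k) • fk k) (hg : g = ∑ k, ENNReal.ofReal (w k) • gk k) :
    W2sq f g ≤ ∑ k, ENNReal.ofReal (w k) * W2sq (fk k) (gk k) := by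
  have hwsum : ∑ k, ENNReal.ofReal (w k) = 1 := by
    rw [← ENNReal.ofReal_sum_of_nonneg (fun k _ => hw k), hsum, ENNReal.ofReal_one]
  refine ENNReal.le_of_forall_pos_le_add fun ε hε hlt => ?_
  have hch : ∀ k : Fin K, ∃ γ : Measure (ℝ × ℝ), IsProbabilityMeasure γ ∧
      γ.map Prod.fst = fk k ∧ γ.map Prod.snd = gk k ∧
      (ENNReal.ofReal (w k) ≠ 0 →
        ∫⁻ p, ENNReal.ofReal ((p.1 - p.2) ^ 2) ∂γ ≤ W2sq (fk k) (gk k) + (ε : ℝ≥0∞)) := by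
    intro k
    by_cases hwk : ENNReal.ofReal (w k) = 0
    · haveI := hfk k; haveI := hgk k
      exact ⟨(fk k).prod (gk k), inferInstance, by simp [Measure.map_fst_prod],
        by simp [Measure.map_snd_prod], fun h => absurd hwk h⟩
    · have hterm : ENNReal.ofReal (w k) * W2sq (fk k) (gk k) < ⊤ := by
        refine lt_of_le_of_lt ?_ hlt
        exact Finset.single_le_sum (f := fun k => ENNReal.ofReal (w k) * W2sq (fk k) (gk k))
          (fun i _ => zero_le) (Finset.mem_univ k)
      have hWk : W2sq (fk k) (gk k) ≠ ⊤ := by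
        intro h
        rw [h, ENNReal.mul_top hwk] at hterm
        exact absurd hterm (lt_irrefl _)
      have : W2sq (fk k) (gk k) < W2sq (fk k) (gk k) + (ε : ℝ≥0∞) :=
        ENNReal.lt_add_right hWk (by exact_mod_cast hε.ne')
      obtain ⟨γ, h1, h2, h3, h4⟩ := exists_coupling_of_lt' this
      exact ⟨γ, h1, h2, h3, fun _ => h4.le⟩
  choose γ hγp hγ1 hγ2 hγc using hch
  set Γ : Measure (ℝ × ℝ) := ∑ k, ENNReal.ofReal (w k) • γ k with hΓ
  have hΓp : IsProbabilityMeasure Γ := by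
    constructor
    rw [hΓ]
    simp only [Measure.finset_sum_apply, Measure.smul_apply, smul_eq_mul]
    simp only [(hγp _).measure_univ, mul_one, hwsum]
  have hΓ1 : Γ.map Prod.fst = f := by
    rw [hΓ, map_finset_sum' _ _ _ measurable_fst, hf]
    exact Finset.sum_congr rfl fun k _ => by rw [hγ1 k]
  have hΓ2 : Γ.map Prod.snd = g := by
    rw [hΓ, map_finset_sum' _ _ _ measurable_snd, hg]
    exact Finset.sum_congr rfl fun k _ => by rw [hγ2 k]
  refine le_trans (W2sq_le' hΓp hΓ1 hΓ2) ?_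
  rw [hΓ, lintegral_finset_sum_measure]
  have hterm : ∀ k : Fin K, ∫⁻ p, ENNReal.ofReal ((p.1 - p.2) ^ 2) ∂(ENNReal.ofReal (w k) • γ k)
      ≤ ENNReal.ofReal (w k) * W2sq (fk k) (gk k) + ENNReal.ofReal (w k) * ε := by
    intro k
    rw [lintegral_smul_measure]
    by_cases hwk : ENNReal.ofReal (w k) = 0
    · simp [hwk]
    · calc ENNReal.ofReal (w k) * ∫⁻ p, ENNReal.ofReal ((p.1 - p.2) ^ 2) ∂γ k
          ≤ ENNReal.ofReal (w k) * (W2sq (fk k) (gk k) + ε) :=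
            mul_le_mul_right (hγc k hwk) _
        _ = _ := by rw [mul_add]
  refine le_trans (Finset.sum_le_sum fun k _ => hterm k) ?_
  rw [Finset.sum_add_distrib, ← Finset.sum_mul, hwsum, one_mul]

lemma W2sq_le_cost (f g : Measure ℝ) [IsProbabilityMeasure g] (T : ℝ → ℝ) (hT : Measurable T)
    (hmap : g.map T = f) : W2sq f g ≤ ∫⁻ y, ENNReal.ofReal ((T y - y) ^ 2) ∂g := by
  have hm : Measurable fun y : ℝ => (T y, y) := hT.prod measurable_id
  have h1 : (g.map fun y => (T y, y)).map Prod.fst = f := by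
    rw [Measure.map_map measurable_fst hm]; exact hmap
  have h2 : (g.map fun y => (T y, y)).map Prod.snd = g := by
    rw [Measure.map_map measurable_snd hm]; exact Measure.map_id
  haveI : IsProbabilityMeasure (g.map fun y => (T y, y)) :=
    Measure.isProbabilityMeasure_map hm.aemeasurable
  refine le_trans (W2sq_le' inferInstance h1 h2) ?_
  rw [lintegral_map (by fun_prop) hm]

lemma map_withDensity_comm {g : Measure ℝ} {T : ℝ → ℝ} (hT : Measurable T)
    {q : ℝ → ℝ≥0∞} (hq : Measurable q) :
    (g.withDensity (q ∘ T)).map T = (g.map T).withDensity q := by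
  ext s hs
  rw [Measure.map_apply hT hs, withDensity_apply _ (hT hs), withDensity_apply _ hs]
  exact (setLIntegral_map hs hq hT).symm

lemma withDensity_finset_sum' {ι : Type*} {α : Type*} [MeasurableSpace α] (μ : Measure α)
    (s : Finset ι) (c : ι → ℝ≥0∞) (q : ι → α → ℝ≥0∞) (hq : ∀ i, Measurable (q i)) :
    μ.withDensity (fun x => ∑ i ∈ s, c i * q i x) = ∑ i ∈ s, c i • μ.withDensity (q i) := by
  classical
  induction s using Finset.induction_on with
  | empty => simp
  | insert _ _ hx ih =>
    rename_i a s'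
    have hsplit : (fun x => ∑ i ∈ insert a s', c i * q i x)
        = (fun x => c a * q a x) + fun x => ∑ i ∈ s', c i * q i x := by
      funext x; simp [Finset.sum_insert hx]
    rw [hsplit, withDensity_add_left ((hq a).const_mul (c a)), Finset.sum_insert hx, ← ih]
    congr 1
    have : (fun x => c a * q a x) = c a • q a := rfl
    rw [this, withDensity_smul _ (hq a)]

lemma wd_pos {a : ℝ → ℝ} (hap : ∀ x, 0 < a x) {s : Set ℝ}
    (hs : MeasurableSet s) (hs0 : volume s ≠ 0) (ham : Measurable a) :
    0 < (volume.withDensity fun x => ENNReal.ofReal (a x)) s := by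
  rw [withDensity_apply _ hs, pos_iff_ne_zero]
  intro h
  rw [lintegral_eq_zero_iff (by fun_prop)] at h
  have h0 : (volume.restrict s) {x | ¬ (ENNReal.ofReal (a x) = 0)} = 0 := h
  have huniv : {x : ℝ | ¬ (ENNReal.ofReal (a x) = 0)} = Set.univ := by
    ext x; simp [ENNReal.ofReal_eq_zero, not_le, hap x]
  rw [huniv, Measure.restrict_apply_univ] at h0
  exact hs0 h0

lemma cdf_strictMono' {a : ℝ → ℝ} (hac : Continuous a) (hap : ∀ x, 0 < a x)
    (m : Measure ℝ) [IsProbabilityMeasure m]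
    (hm : m = volume.withDensity fun x => ENNReal.ofReal (a x)) :
    StrictMono (cdf m) := by
  intro x y hxy
  rw [cdf_eq_real, cdf_eq_real, measureReal_def, measureReal_def]
  have hlt : m (Iic x) < m (Iic y) := by
    have hdecomp : Iic x ∪ Ioc x y = Iic y := Set.Iic_union_Ioc_eq_Iic hxy.le
    have hdisj : Disjoint (Iic x) (Ioc x y) := by
      simp only [Set.disjoint_left, mem_Iic, mem_Ioc, not_and]
      intro z hz hz2; exact absurd hz2 (not_lt.mpr hz)
    have hadd := measure_union hdisj (measurableSet_Ioc) (μ := m)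
    rw [hdecomp] at hadd
    rw [hadd]
    have hpos : 0 < m (Ioc x y) := by
      rw [hm]
      refine wd_pos hap measurableSet_Ioc ?_ hac.measurable
      simp [Real.volume_Ioc, ENNReal.ofReal_eq_zero, hxy]
    exact ENNReal.lt_add_right (measure_ne_top m _) hpos.ne'
  exact ENNReal.toReal_lt_toReal (measure_ne_top m _) (measure_ne_top m _) |>.mpr hlt

lemma cdf_mem_Ioo' {a : ℝ → ℝ} (hac : Continuous a) (hap : ∀ x, 0 < a x)
    (m : Measure ℝ) [IsProbabilityMeasure m]
    (hm : m = volume.withDensity fun x => ENNReal.ofReal (a x))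
    (x : ℝ) : cdf m x ∈ Set.Ioo (0:ℝ) 1 := by
  constructor
  · rw [cdf_eq_real, measureReal_def]
    refine ENNReal.toReal_pos ?_ (measure_ne_top m _)
    have : 0 < m (Iic x) := by
      rw [hm]; exact wd_pos hap measurableSet_Iic (by simp) hac.measurable
    exact this.ne'
  · rw [cdf_eq_real, measureReal_def]
    have h1 : m (Iic x) < 1 := by
      have hdecomp : Iic x ∪ Ioi x = Set.univ := Set.Iic_union_Ioi
      have hdisj : Disjoint (Iic x) (Ioi x) := by
        simp [Set.disjoint_left]
      have hadd := measure_union hdisj (measurableSet_Ioi) (μ := m)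
      rw [hdecomp, measure_univ] at hadd
      have hpos : 0 < m (Ioi x) := by
        rw [hm]; exact wd_pos hap measurableSet_Ioi (by simp) hac.measurable
      calc m (Iic x) < m (Iic x) + m (Ioi x) :=
            ENNReal.lt_add_right (measure_ne_top m _) hpos.ne'
        _ = 1 := hadd.symm
    calc (m (Iic x)).toReal < (1 : ℝ≥0∞).toReal :=
          ENNReal.toReal_lt_toReal (measure_ne_top m _) (by simp) |>.mpr h1
      _ = 1 := by simp

lemma cdf_continuous' {a : ℝ → ℝ} (m : Measure ℝ) [IsProbabilityMeasure m]
    (hm : m = volume.withDensity fun x => ENNReal.ofReal (a x)) :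
    Continuous (cdf m) := by
  have hatom : ∀ x : ℝ, m {x} = 0 := by
    intro x
    rw [hm, withDensity_apply _ (measurableSet_singleton x)]
    simp [Measure.restrict_singleton]
  refine continuous_iff_continuousAt.mpr fun x => ?_
  rw [(monotone_cdf m).continuousAt_iff_leftLim_eq_rightLim]
  have hr : Function.rightLim (cdf m) x = cdf m x := (cdf m).rightLim_eq x
  have hl : Function.leftLim (cdf m) x = cdf m x := by
    have hs := (cdf m).measure_singleton x
    rw [measure_cdf, hatom x] at hs
    have h0 : cdf m x - Function.leftLim (cdf m) x ≤ 0 :=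
      ENNReal.ofReal_eq_zero.mp hs.symm
    have h1 : Function.leftLim (cdf m) x ≤ cdf m x :=
      (monotone_cdf m).leftLim_le le_rfl
    linarith
  rw [hl, hr]

lemma cdf_surj' (m : Measure ℝ) [IsProbabilityMeasure m] (hc : Continuous (cdf m)) :
    ∀ s ∈ Set.Ioo (0:ℝ) 1, ∃ c, cdf m c = s := by
  intro s hs
  obtain ⟨a, ha⟩ := ((tendsto_cdf_atBot m).eventually (eventually_lt_nhds hs.1)).exists
  obtain ⟨b, hb⟩ := ((tendsto_cdf_atTop m).eventually
    (eventually_gt_nhds hs.2)).exists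
  have hab : a ≤ b := by
    by_contra hcon
    push_neg at hcon
    exact absurd ((monotone_cdf m) hcon.le) (by linarith)
  have hmem : s ∈ Set.Icc (cdf m a) (cdf m b) := ⟨ha.le, hb.le⟩
  obtain ⟨c, _, hc⟩ := intermediate_value_Icc hab hc.continuousOn hmem
  exact ⟨c, hc⟩

lemma young_step {S : ℝ → ℝ} (hS : Monotone S) (a b : ℝ) :
    S a * (b - a) ≤ ∫ t in a..b, S t := by
  rcases le_total a b with hab | hba
  · have h : ∫ t in a..b, S a ≤ ∫ t in a..b, S t :=
      intervalIntegral.integral_mono_on hab intervalIntegrable_const hS.intervalIntegrable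
        (fun t ht => hS ht.1)
    rw [intervalIntegral.integral_const, smul_eq_mul] at h
    linarith [h]
  · have h : ∫ t in b..a, S t ≤ ∫ t in b..a, S a :=
      intervalIntegral.integral_mono_on hba hS.intervalIntegrable intervalIntegrable_const
        (fun t ht => hS ht.2)
    rw [intervalIntegral.integral_const, smul_eq_mul] at h
    rw [intervalIntegral.integral_symm]
    nlinarith [h]

lemma cost_le_W2sq (f g : Measure ℝ) [IsProbabilityMeasure f] [IsProbabilityMeasure g]
    (hf2 : (∫⁻ x, ENNReal.ofReal (x ^ 2) ∂f) < ⊤) (hg2 : (∫⁻ x, ENNReal.ofReal (x ^ 2) ∂g) < ⊤)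
    (T S : ℝ → ℝ) (hT : Measurable T) (hS : Monotone S) (hST : ∀ y, S (T y) = y)
    (hmap : g.map T = f) :
    ∫⁻ y, ENNReal.ofReal ((T y - y) ^ 2) ∂g ≤ W2sq f g := by
  have hSm : Measurable S := hS.measurable
  set H : ℝ → ℝ := fun x => ∫ t in (0:ℝ)..x, S t with hHdef
  have hHcont : Continuous H :=
    intervalIntegral.continuous_primitive (fun a b => hS.intervalIntegrable) 0
  set h : ℝ → ℝ := fun x => x ^ 2 - 2 * H x with hhdef
  have hhcont : Continuous h := by
    rw [hhdef]; fun_prop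
  have hHbound : ∀ x : ℝ, |H x| ≤ |x| * (|S 0| + |S x|) := by
    intro x
    have hb : ‖∫ t in (0:ℝ)..x, S t‖ ≤ (|S 0| + |S x|) * |x - 0| := by
      refine intervalIntegral.norm_integral_le_of_norm_le_const fun t ht => ?_
      rw [Real.norm_eq_abs]
      rcases le_total (0:ℝ) x with hx | hx
      · rw [Set.uIoc_of_le hx] at ht
        have h1 : S 0 ≤ S t := hS ht.1.le
        have h2 : S t ≤ S x := hS ht.2
        refine abs_le.mpr ⟨?_, ?_⟩ <;>
          [linarith [neg_abs_le (S 0), abs_nonneg (S x)];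
           linarith [le_abs_self (S x), abs_nonneg (S 0)]]
      · rw [Set.uIoc_of_ge hx] at ht
        have h1 : S x ≤ S t := hS ht.1.le
        have h2 : S t ≤ S 0 := hS ht.2
        refine abs_le.mpr ⟨?_, ?_⟩ <;>
          [linarith [neg_abs_le (S x), abs_nonneg (S 0)];
           linarith [le_abs_self (S 0), abs_nonneg (S x)]]
    rw [Real.norm_eq_abs, sub_zero] at hb
    calc |H x| ≤ (|S 0| + |S x|) * |x| := hb
      _ = |x| * (|S 0| + |S x|) := mul_comm _ _
  have key : ∀ x y : ℝ, (T y - y) ^ 2 + (h x - h (T y)) ≤ (x - y) ^ 2 := by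
    intro x y
    have h1 : S (T y) * (x - T y) ≤ ∫ t in (T y)..x, S t := young_step hS (T y) x
    rw [hST y] at h1
    have h2 : H x - H (T y) = ∫ t in (T y)..x, S t := by
      rw [hHdef]
      simp only
      rw [intervalIntegral.integral_interval_sub_left (hS.intervalIntegrable)
        (hS.intervalIntegrable)]
    simp only [hhdef]
    nlinarith [h1, h2]
  have hhbound : ∀ x : ℝ, ‖h x‖ ≤ 3 * x ^ 2 + (S 0) ^ 2 + (S x) ^ 2 := by
    intro x
    rw [Real.norm_eq_abs]
    have hb := hHbound x
    have e1 : 2 * (|x| * |S 0|) ≤ x ^ 2 + (S 0) ^ 2 := by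
      nlinarith [sq_nonneg (|x| - |S 0|), sq_abs x, sq_abs (S 0)]
    have e2 : 2 * (|x| * |S x|) ≤ x ^ 2 + (S x) ^ 2 := by
      nlinarith [sq_nonneg (|x| - |S x|), sq_abs x, sq_abs (S x)]
    refine abs_le.mpr ⟨?_, ?_⟩ <;> simp only [hhdef] <;>
      [nlinarith [le_abs_self (H x), abs_nonneg x, abs_nonneg (S 0), abs_nonneg (S x),
        mul_add (|x|) (|S 0|) (|S x|)];
       nlinarith [neg_abs_le (H x), abs_nonneg x, abs_nonneg (S 0), abs_nonneg (S x),
        mul_add (|x|) (|S 0|) (|S x|)]]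
  refine le_iInf fun γ => le_iInf fun hγ => le_iInf fun hγ1 => le_iInf fun hγ2 => ?_
  haveI := hγ
  by_cases hA : ∫⁻ p, ENNReal.ofReal ((p.1 - p.2) ^ 2) ∂γ = ⊤
  · rw [hA]; exact le_top
  have hsq_meas : Continuous fun x : ℝ => x ^ 2 := by fun_prop
  have hf2i : Integrable (fun x => x ^ 2) f :=
    ⟨hsq_meas.aestronglyMeasurable,
      (hasFiniteIntegral_iff_ofReal (ae_of_all _ fun x => sq_nonneg x)).mpr hf2⟩
  have hg2i : Integrable (fun x => x ^ 2) g :=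
    ⟨hsq_meas.aestronglyMeasurable,
      (hasFiniteIntegral_iff_ofReal (ae_of_all _ fun x => sq_nonneg x)).mpr hg2⟩
  have hTsqg : Integrable (fun y => (T y) ^ 2) g := by
    have := (integrable_map_measure hsq_meas.aestronglyMeasurable hT.aemeasurable).mp
      (by rw [hmap]; exact hf2i)
    simpa [Function.comp_def] using this
  have hSsqf : Integrable (fun x => (S x) ^ 2) f := by
    rw [← hmap]
    refine (integrable_map_measure ((hSm.pow_const 2).aestronglyMeasurable)
      hT.aemeasurable).mpr ?_
    have hcomp : ((fun x => S x ^ 2) ∘ T) = fun x : ℝ => x ^ 2 := by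
      funext x; simp [Function.comp, hST x]
    rw [hcomp]; exact hg2i
  have hhf : Integrable h f := by
    refine Integrable.mono' (((hf2i.const_mul 3).add (integrable_const ((S 0) ^ 2))).add hSsqf)
      hhcont.aestronglyMeasurable (ae_of_all _ fun x => ?_)
    simpa using hhbound x
  have hag : Integrable (fun y => (T y - y) ^ 2) g := by
    refine Integrable.mono' ((hTsqg.const_mul 2).add (hg2i.const_mul 2))
      (((hT.sub measurable_id).pow_const 2).aestronglyMeasurable) (ae_of_all _ fun y => ?_)
    have hb : (T y - y) ^ 2 ≤ 2 * (T y) ^ 2 + 2 * y ^ 2 := by nlinarith [sq_nonneg (T y + y)]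
    simp only [Pi.add_apply]
    rw [Real.norm_eq_abs, abs_of_nonneg (sq_nonneg _)]
    exact hb
  have hhTg : Integrable (fun y => h (T y)) g := by
    have := (integrable_map_measure hhcont.aestronglyMeasurable hT.aemeasurable).mp
      (by rw [hmap]; exact hhf)
    simpa [Function.comp_def] using this
  have hc_int : Integrable (fun p : ℝ × ℝ => (p.1 - p.2) ^ 2) γ :=
    ⟨(by fun_prop : Continuous fun p : ℝ × ℝ => (p.1 - p.2) ^ 2).aestronglyMeasurable,
      (hasFiniteIntegral_iff_ofReal (ae_of_all _ fun p => sq_nonneg _)).mpr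
        (lt_top_iff_ne_top.mpr hA)⟩
  have hγ1i : Integrable (fun p : ℝ × ℝ => h p.1) γ := by
    have := (integrable_map_measure hhcont.aestronglyMeasurable
      measurable_fst.aemeasurable).mp (by rw [hγ1]; exact hhf)
    simpa [Function.comp_def] using this
  have hγ2a : Integrable (fun p : ℝ × ℝ => (T p.2 - p.2) ^ 2) γ := by
    have := (integrable_map_measure (((hT.sub measurable_id).pow_const 2).aestronglyMeasurable)
      measurable_snd.aemeasurable).mp (by rw [hγ2]; exact hag)
    simpa [Function.comp_def] using this
  have hγ2b : Integrable (fun p : ℝ × ℝ => h (T p.2)) γ := by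
    have := (integrable_map_measure ((hhcont.measurable.comp hT).aestronglyMeasurable)
      measurable_snd.aemeasurable).mp (by rw [hγ2]; exact hhTg)
    simpa [Function.comp_def] using this
  have hmsa : AEStronglyMeasurable (fun y : ℝ => (T y - y) ^ 2) (γ.map Prod.snd) :=
    Measurable.aestronglyMeasurable (by exact (hT.sub measurable_id).pow_const 2)
  have hmsb : AEStronglyMeasurable (fun y : ℝ => h (T y)) (γ.map Prod.snd) :=
    Measurable.aestronglyMeasurable (by exact hhcont.measurable.comp hT)
  have t1 : ∫ y, (T y - y) ^ 2 ∂g = ∫ p : ℝ × ℝ, (T p.2 - p.2) ^ 2 ∂γ := by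
    conv_lhs => rw [← hγ2]
    exact integral_map measurable_snd.aemeasurable hmsa
  have t2 : ∫ p : ℝ × ℝ, h p.1 ∂γ = ∫ x, h x ∂f := by
    rw [← hγ1, integral_map measurable_fst.aemeasurable hhcont.aestronglyMeasurable]
  have t3 : ∫ p : ℝ × ℝ, h (T p.2) ∂γ = ∫ y, h (T y) ∂g := by
    conv_rhs => rw [← hγ2]
    exact (integral_map measurable_snd.aemeasurable hmsb).symm
  have t4 : ∫ x, h x ∂f = ∫ y, h (T y) ∂g := by
    rw [← hmap, integral_map hT.aemeasurable hhcont.aestronglyMeasurable]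
  have main : ∫ y, (T y - y) ^ 2 ∂g ≤ ∫ p : ℝ × ℝ, (p.1 - p.2) ^ 2 ∂γ := by
    have hsub : Integrable (fun p : ℝ × ℝ => h p.1 - h (T p.2)) γ := hγ1i.sub hγ2b
    have hsum : ∫ p : ℝ × ℝ, ((T p.2 - p.2) ^ 2 + (h p.1 - h (T p.2))) ∂γ
        ≤ ∫ p : ℝ × ℝ, (p.1 - p.2) ^ 2 ∂γ := by
      refine integral_mono (hγ2a.add hsub) hc_int fun p => key p.1 p.2
    rw [integral_add hγ2a hsub, integral_sub hγ1i hγ2b, t2, t3, t4,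
      sub_self, add_zero] at hsum
    rw [t1]
    exact hsum
  calc ∫⁻ y, ENNReal.ofReal ((T y - y) ^ 2) ∂g
      = ENNReal.ofReal (∫ y, (T y - y) ^ 2 ∂g) :=
        (ofReal_integral_eq_lintegral_ofReal hag (ae_of_all _ fun y => sq_nonneg _)).symm
    _ ≤ ENNReal.ofReal (∫ p : ℝ × ℝ, (p.1 - p.2) ^ 2 ∂γ) := ENNReal.ofReal_le_ofReal main
    _ = ∫⁻ p, ENNReal.ofReal ((p.1 - p.2) ^ 2) ∂γ :=
        ofReal_integral_eq_lintegral_ofReal hc_int (ae_of_all _ fun p => sq_nonneg _)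

end Auxiliary

/-- Variational characterization of W₂² via mixture decompositions: for a fixed mixture
decomposition f = Σ π_k f_k, W₂²(f, g) is the minimum of Σ_k π_k W₂²(f_k, g_k) over all
mixture decompositions g = Σ π_k g_k with the same weights, attained at
g_k(x) = g(x) · f_k(F⁻¹(G(x))) / Σ_l π_l f_l(F⁻¹(G(x))). -/
theorem W2sq_variational_mixture_decomposition
    (K : ℕ) (hK : 0 < K) (w : Fin K → ℝ) (hw : ∀ k, 0 ≤ w k) (hsum : ∑ k, w k = 1)
    (f g : Measure ℝ) (hf : MemP2 f) (hg : MemP2 g)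
    (df dg : ℝ → ℝ) (hdfc : Continuous df) (hdgc : Continuous dg)
    (hdfpos : ∀ x, 0 < df x) (hdgpos : ∀ x, 0 < dg x)
    (hfd : f = MeasureTheory.volume.withDensity (fun x => ENNReal.ofReal (df x)))
    (hgd : g = MeasureTheory.volume.withDensity (fun x => ENNReal.ofReal (dg x)))
    (Finv : ℝ → ℝ)
    (hFinv : ∀ x : ℝ, Finv (ProbabilityTheory.cdf f x) = x)
    (hFinv' : ∀ s ∈ Set.Ioo (0 : ℝ) 1, ProbabilityTheory.cdf f (Finv s) = s)
    (dfk : Fin K → ℝ → ℝ) (hdfkc : ∀ k, Continuous (dfk k)) (hdfknn : ∀ k x, 0 ≤ dfk k x)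
    (hfkprob : ∀ k, IsProbabilityMeasure
      (MeasureTheory.volume.withDensity fun x => ENNReal.ofReal (dfk k x)))
    (hfdec : f = ∑ k, ENNReal.ofReal (w k) •
      MeasureTheory.volume.withDensity fun x => ENNReal.ofReal (dfk k x)) :
    -- lower bound over all decompositions of g with the same weights
    (∀ gk : Fin K → Measure ℝ, (∀ k, IsProbabilityMeasure (gk k)) →
      g = (∑ k, ENNReal.ofReal (w k) • gk k) →
      W2sq f g ≤ ∑ k, ENNReal.ofReal (w k) *
        W2sq (MeasureTheory.volume.withDensity fun x => ENNReal.ofReal (dfk k x)) (gk k)) ∧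
    -- the minimum is attained at the stated optimal decomposition
    (fun (gk : Fin K → ℝ → ℝ) =>
      (∀ k, IsProbabilityMeasure
          (MeasureTheory.volume.withDensity fun x => ENNReal.ofReal (gk k x))) ∧
      g = (∑ k, ENNReal.ofReal (w k) •
          MeasureTheory.volume.withDensity fun x => ENNReal.ofReal (gk k x)) ∧
      W2sq f g = ∑ k, ENNReal.ofReal (w k) *
        W2sq (MeasureTheory.volume.withDensity fun x => ENNReal.ofReal (dfk k x))
          (MeasureTheory.volume.withDensity fun x => ENNReal.ofReal (gk k x)))
      (fun k x => dg x * dfk k (Finv (ProbabilityTheory.cdf g x)) /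
        ∑ l, w l * dfk l (Finv (ProbabilityTheory.cdf g x))) := by
  classical
  obtain ⟨hfprob, hf2⟩ := hf
  obtain ⟨hgprob, hg2⟩ := hg
  haveI := hfprob
  haveI := hgprob
  -- the fixed first-marginal components
  set Fk : Fin K → Measure ℝ :=
    fun k => volume.withDensity fun x => ENNReal.ofReal (dfk k x) with hFk
  -- pointwise density identity : ∑ w_l * dfk_l = df
  have hDdf : ∀ x, ∑ l, w l * dfk l x = df x := by
    have hDc : Continuous fun x => ∑ l, w l * dfk l x := by
      exact continuous_finset_sum _ fun l _ => (continuous_const.mul (hdfkc l))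
    have h1 : volume.withDensity (fun x => ENNReal.ofReal (df x))
        = volume.withDensity (fun x => ENNReal.ofReal (∑ l, w l * dfk l x)) := by
      rw [← hfd, hfdec]
      have hpt : (fun x => ENNReal.ofReal (∑ l, w l * dfk l x))
          = fun x => ∑ l, ENNReal.ofReal (w l) * ENNReal.ofReal (dfk l x) := by
        funext x
        rw [ENNReal.ofReal_sum_of_nonneg (fun l _ => mul_nonneg (hw l) (hdfknn l x))]
        exact Finset.sum_congr rfl fun l _ => ENNReal.ofReal_mul (hw l)
      rw [hpt]
      exact (withDensity_finset_sum' volume Finset.univ (fun l => ENNReal.ofReal (w l))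
        (fun l x => ENNReal.ofReal (dfk l x)) (fun l => by fun_prop)).symm
    have h2 : (fun x => ENNReal.ofReal (df x))
        =ᵐ[volume] fun x => ENNReal.ofReal (∑ l, w l * dfk l x) :=
      (withDensity_eq_iff_of_sigmaFinite
        ((ENNReal.measurable_ofReal.comp hdfc.measurable).aemeasurable)
        ((ENNReal.measurable_ofReal.comp hDc.measurable).aemeasurable)).mp h1
    have h3 : df =ᵐ[volume] fun x => ∑ l, w l * dfk l x := by
      filter_upwards [h2] with x hx
      have := congrArg ENNReal.toReal hx
      rwa [ENNReal.toReal_ofReal (hdfpos x).le,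
        ENNReal.toReal_ofReal (Finset.sum_nonneg fun l _ => mul_nonneg (hw l) (hdfknn l x))]
        at this
    have h4 : df = fun x => ∑ l, w l * dfk l x := (hdfc.ae_eq_iff_eq volume hDc).mp h3
    exact fun x => (congrFun h4 x).symm
  -- cdf facts
  have hgsm : StrictMono (cdf g) := cdf_strictMono' hdgc hdgpos g hgd
  have hfsm : StrictMono (cdf f) := cdf_strictMono' hdfc hdfpos f hfd
  have hgIoo : ∀ x, cdf g x ∈ Set.Ioo (0:ℝ) 1 := cdf_mem_Ioo' hdgc hdgpos g hgd
  have hfIoo : ∀ x, cdf f x ∈ Set.Ioo (0:ℝ) 1 := cdf_mem_Ioo' hdfc hdfpos f hfd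
  have hgcont : Continuous (cdf g) := cdf_continuous' g hgd
  set T : ℝ → ℝ := fun x => Finv (cdf g x) with hTdef
  have hcdfT : ∀ x, cdf f (T x) = cdf g x := fun x => hFinv' _ (hgIoo x)
  have hTsm : StrictMono T := by
    intro x y hxy
    have h1 : cdf g x < cdf g y := hgsm hxy
    by_contra hcon
    push_neg at hcon
    have h2 : cdf f (T y) ≤ cdf f (T x) := monotone_cdf f hcon
    rw [hcdfT, hcdfT] at h2
    linarith
  have hTmeas : Measurable T := hTsm.monotone.measurable
  have hsurj : ∀ s ∈ Set.Ioo (0:ℝ) 1, ∃ c, cdf g c = s := cdf_surj' g hgcont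
  set S : ℝ → ℝ := fun y => Classical.choose (hsurj _ (hfIoo y)) with hSdef
  have hSspec : ∀ y, cdf g (S y) = cdf f y := fun y => Classical.choose_spec (hsurj _ (hfIoo y))
  have hST : ∀ y, S (T y) = y := by
    intro y
    have h := hSspec (T y)
    rw [hcdfT y] at h
    exact hgsm.injective h
  have hSmono : Monotone S := by
    intro y y' hyy
    have h : cdf g (S y) ≤ cdf g (S y') := by
      rw [hSspec, hSspec]; exact monotone_cdf f hyy
    exact (hgsm.le_iff_le).mp h
  -- pushforward along T
  have hmapT : g.map T = f := by
    haveI : IsProbabilityMeasure (g.map T) := Measure.isProbabilityMeasure_map hTmeas.aemeasurable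
    refine Measure.ext_of_Iic (g.map T) f fun a => ?_
    rw [Measure.map_apply hTmeas measurableSet_Iic]
    obtain ⟨c, hc⟩ := hsurj (cdf f a) (hfIoo a)
    have hpre : T ⁻¹' Set.Iic a = Set.Iic c := by
      ext x
      simp only [Set.mem_preimage, Set.mem_Iic]
      constructor
      · intro hxa
        have h : cdf g x ≤ cdf f a := by rw [← hcdfT x]; exact monotone_cdf f hxa
        rw [← hc] at h
        exact (hgsm.le_iff_le).mp h
      · intro hxc
        have h : cdf g x ≤ cdf g c := monotone_cdf g hxc
        rw [hc, ← hcdfT x] at h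
        exact (hfsm.le_iff_le).mp h
    rw [hpre, ← ofReal_cdf g c, hc, ofReal_cdf f a]
  -- the candidate optimal components
  set gkd : Fin K → ℝ → ℝ := fun k x => dg x * dfk k (T x) / df (T x) with hgkd
  have hgkdnn : ∀ k x, 0 ≤ gkd k x := fun k x =>
    div_nonneg (mul_nonneg (hdgpos x).le (hdfknn k (T x))) (hdfpos (T x)).le
  have hgkdeq : ∀ (k : Fin K) (x : ℝ),
      dg x * dfk k (Finv (ProbabilityTheory.cdf g x)) /
        (∑ l, w l * dfk l (Finv (ProbabilityTheory.cdf g x))) = gkd k x := by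
    intro k x
    rw [hDdf (Finv (cdf g x))]
  have hgkdm : ∀ k : Fin K, Measurable fun x => ENNReal.ofReal (gkd k x) := by
    intro k
    have hm1 : Measurable fun x => dg x * dfk k (T x) / df (T x) :=
      (hdgc.measurable.mul ((hdfkc k).measurable.comp hTmeas)).div
        (hdfc.measurable.comp hTmeas)
    exact ENNReal.measurable_ofReal.comp hm1
  set mk : Fin K → Measure ℝ :=
    fun k => volume.withDensity fun x => ENNReal.ofReal (gkd k x) with hmk
  have hmkmap : ∀ k, (mk k).map T = Fk k := by
    intro k
    have hqr : Measurable fun y => dfk k y / df y :=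
      (hdfkc k).measurable.div hdfc.measurable
    have hq : Measurable fun y => ENNReal.ofReal (dfk k y / df y) :=
      ENNReal.measurable_ofReal.comp hqr
    have e1 : mk k = g.withDensity ((fun y => ENNReal.ofReal (dfk k y / df y)) ∘ T) := by
      show (volume.withDensity fun x => ENNReal.ofReal (gkd k x)) = _
      rw [hgd, ← withDensity_mul _
        (show Measurable fun x : ℝ => ENNReal.ofReal (dg x) by fun_prop)
        (show Measurable ((fun y => ENNReal.ofReal (dfk k y / df y)) ∘ T) from hq.comp hTmeas)]
      congr 1
      funext x
      simp only [Pi.mul_apply, Function.comp_apply]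
      rw [← ENNReal.ofReal_mul (hdgpos x).le]
      show ENNReal.ofReal (dg x * dfk k (T x) / df (T x)) = _
      rw [mul_div_assoc]
    rw [e1, map_withDensity_comm hTmeas hq, hmapT, hfd,
      ← withDensity_mul _
        (show Measurable fun x : ℝ => ENNReal.ofReal (df x) by fun_prop) hq]
    show _ = volume.withDensity fun x => ENNReal.ofReal (dfk k x)
    congr 1
    funext y
    simp only [Pi.mul_apply]
    rw [← ENNReal.ofReal_mul (hdfpos y).le]
    congr 1
    rw [mul_comm (df y) (dfk k y / df y), div_mul_cancel₀ (dfk k y) (hdfpos y).ne']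
  have hmkprob : ∀ k, IsProbabilityMeasure (mk k) := by
    intro k
    constructor
    have huniv : (mk k) Set.univ = ((mk k).map T) Set.univ := by
      rw [Measure.map_apply hTmeas MeasurableSet.univ]
      simp
    rw [huniv, hmkmap k]
    exact (hfkprob k).measure_univ
  have hgdec : g = ∑ k, ENNReal.ofReal (w k) • mk k := by
    have hdf0 : ∀ x : ℝ, df (T x) ≠ 0 := fun x => (hdfpos (T x)).ne'
    have hpt : (fun x => ENNReal.ofReal (dg x))
        = fun x => ∑ l, ENNReal.ofReal (w l) * ENNReal.ofReal (gkd l x) := by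
      funext x
      have hterm : ∀ l : Fin K, ENNReal.ofReal (w l) * ENNReal.ofReal (gkd l x)
          = ENNReal.ofReal (w l * gkd l x) := fun l => (ENNReal.ofReal_mul (hw l)).symm
      rw [Finset.sum_congr rfl fun l _ => hterm l,
        ← ENNReal.ofReal_sum_of_nonneg (fun l _ => mul_nonneg (hw l) (hgkdnn l x))]
      congr 1
      have hexp : ∀ l : Fin K, w l * gkd l x = (w l * dfk l (T x)) * dg x / df (T x) := by
        intro l
        show w l * (dg x * dfk l (T x) / df (T x)) = _
        field_simp
      rw [Finset.sum_congr rfl fun l _ => hexp l, ← Finset.sum_div, ← Finset.sum_mul,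
        hDdf (T x), mul_comm (df (T x)) (dg x), mul_div_assoc, div_self (hdf0 x), mul_one]
    rw [hgd, hpt]
    exact withDensity_finset_sum' volume Finset.univ (fun l => ENNReal.ofReal (w l))
      (fun l x => ENNReal.ofReal (gkd l x)) hgkdm
  -- main bounds
  have hC : ∫⁻ y, ENNReal.ofReal ((T y - y) ^ 2) ∂g ≤ W2sq f g :=
    cost_le_W2sq f g hf2 hg2 T S hTmeas hSmono hST hmapT
  have hup : W2sq f g ≤ ∑ k, ENNReal.ofReal (w k) * W2sq (Fk k) (mk k) :=
    W2sq_mixture_le K w hw hsum f g Fk mk hfkprob hmkprob hfdec hgdec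
  have heach : ∀ k, W2sq (Fk k) (mk k) ≤ ∫⁻ x, ENNReal.ofReal ((T x - x) ^ 2) ∂(mk k) := by
    intro k
    haveI := hmkprob k
    exact W2sq_le_cost (Fk k) (mk k) T hTmeas (hmkmap k)
  have hsumC : ∑ k, ENNReal.ofReal (w k) * ∫⁻ x, ENNReal.ofReal ((T x - x) ^ 2) ∂(mk k)
      = ∫⁻ x, ENNReal.ofReal ((T x - x) ^ 2) ∂g := by
    conv_rhs => rw [hgdec]
    rw [lintegral_finset_sum_measure]
    exact Finset.sum_congr rfl fun k _ => by rw [lintegral_smul_measure, smul_eq_mul]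
  have hlow : ∑ k, ENNReal.ofReal (w k) * W2sq (Fk k) (mk k) ≤ W2sq f g := by
    calc ∑ k, ENNReal.ofReal (w k) * W2sq (Fk k) (mk k)
        ≤ ∑ k, ENNReal.ofReal (w k) * ∫⁻ x, ENNReal.ofReal ((T x - x) ^ 2) ∂(mk k) :=
          Finset.sum_le_sum fun k _ => mul_le_mul_right (heach k) _
      _ = ∫⁻ x, ENNReal.ofReal ((T x - x) ^ 2) ∂g := hsumC
      _ ≤ W2sq f g := hC
  have heq : W2sq f g = ∑ k, ENNReal.ofReal (w k) * W2sq (Fk k) (mk k) :=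
    le_antisymm hup hlow
  constructor
  · intro gk hgkprob hgdec'
    exact W2sq_mixture_le K w hw hsum f g Fk gk hfkprob hgkprob hfdec hgdec'
  · refine ⟨?_, ?_, ?_⟩
    · intro k
      have hdens : (fun x => ENNReal.ofReal
          (dg x * dfk k (Finv (ProbabilityTheory.cdf g x)) /
            ∑ l, w l * dfk l (Finv (ProbabilityTheory.cdf g x))))
          = fun x => ENNReal.ofReal (gkd k x) := by
        funext x; rw [hgkdeq k x]
      rw [hdens]
      exact hmkprob k
    · have hdens : ∀ k : Fin K, (fun x => ENNReal.ofReal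
          (dg x * dfk k (Finv (ProbabilityTheory.cdf g x)) /
            ∑ l, w l * dfk l (Finv (ProbabilityTheory.cdf g x))))
          = fun x => ENNReal.ofReal (gkd k x) := by
        intro k; funext x; rw [hgkdeq k x]
      calc g = ∑ k, ENNReal.ofReal (w k) • mk k := hgdec
        _ = _ := by
          refine Finset.sum_congr rfl fun k _ => ?_
          rw [hdens k]
    · have hdens : ∀ k : Fin K, (fun x => ENNReal.ofReal
          (dg x * dfk k (Finv (ProbabilityTheory.cdf g x)) /
            ∑ l, w l * dfk l (Finv (ProbabilityTheory.cdf g x))))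
          = fun x => ENNReal.ofReal (gkd k x) := by
        intro k; funext x; rw [hgkdeq k x]
      calc W2sq f g = ∑ k, ENNReal.ofReal (w k) * W2sq (Fk k) (mk k) := heq
        _ = _ := by
          refine Finset.sum_congr rfl fun k _ => ?_
          rw [hdens k]
end
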